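/- arXiv:1612.01984 — 4 statements merged into one kernel-verified Lean document; each statement's English description precedes it below -/
import Mathlib

section
/- Let k ≥ 1, let (B,s) ∈ V_k with |B| = k, and write s = Σ_{i=1}^k σ_i 2^{−i} with σ_i ∈ {0,1} and σ_k = 1. Let (A,r) ∈ V_k. Then {(A,r),(B,s)} ∈ E_k if and only if A ≺ B and one of the following two alternatives holds: (i) r = s − 2^{−k}, and if i^− := max{1 ≤ i ≤ k−1 : σ_i = 1} exists then A = B|_{i^−} and r = Σ_{i=1}^{i^−} σ_i 2^{−i}, while if no such i exists then A = ∅ and r = 0; (ii) r = s + 2^{−k}, and if i^+ := max{1 ≤ i ≤ k−1 : σ_i = 0} exists then A = B|_{i^+} and r = Σ_{i=1}^{i^+−1} σ_i 2^{−i} + 2^{−i^+}, while if no such i exists then A = ∅ and r = 1. -/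
namespace DiamondPaper

/-- The set `𝔹_m ⊆ ℝ`: `𝔹_0 = {0,1}` and, for `m ≥ 1`,
`𝔹_m = {(2i−1)/2^m : i = 1,…,2^{m−1}}`. -/
def Bset : ℕ → Set ℝ
  | 0 => {0, 1}
  | (m + 1) => {r | ∃ i : ℕ, 1 ≤ i ∧ i ≤ 2 ^ m ∧ r = (2 * (i : ℝ) - 1) / 2 ^ (m + 1)}

/-- `A ≺ B` : `B` strictly extends `A`. -/
def Prec (A B : Finset ℕ) : Prop :=
  A ⊆ B ∧ A.card < B.card ∧ ∀ a ∈ A, ∀ b ∈ B, b ∉ A → a < b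

/-- `B|_m`: the set of the `m` smallest elements of `B`. -/
def restrict (B : Finset ℕ) (m : ℕ) : Finset ℕ :=
  ((B.sort (· ≤ ·)).take m).toFinset

/-- The vertex predicate for the countably branching diamond graph `G_k`. -/
def IsVertex (k : ℕ) (v : Finset ℕ × ℝ) : Prop :=
  v.1.card ≤ k ∧ v.2 ∈ Bset v.1.card

/-- The vertex set `V_k`. -/
def Vert (k : ℕ) : Type := {v : Finset ℕ × ℝ // IsVertex k v}

/-- The countably branching diamond graph `G_k` of depth `k`. -/
def Gk (k : ℕ) : SimpleGraph (Vert k) where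
  Adj u v := (Prec u.1.1 v.1.1 ∨ Prec v.1.1 u.1.1) ∧ |u.1.2 - v.1.2| = (1/2 : ℝ) ^ k
  symm := by
    constructor
    intro u v h
    exact ⟨h.1.symm, by rw [abs_sub_comm]; exact h.2⟩
  loopless := by
    constructor
    intro v h
    rcases h.1 with h1 | h1 <;> exact absurd h1.2.1 (lt_irrefl _)

/-!
Let `(A, r)` be a neighbour of `(B, s)`. Since `|B| = k`, necessarily `A ≺ B`, so `A = B|_{|A|}`,
and `r = s ± 2^{-k}`. Removing the final digit `σ_k = 1` and then the trailing zeros gives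
`s - 2^{-k} = 0.σ_1…σ_{i⁻}`; adding `2^{-k}` carries through the trailing ones and gives
`s + 2^{-k} = 0.σ_1…σ_{i⁺-1}1`. The sets `𝔹_m` are pairwise disjoint (for `m ≥ 1` their elements
have odd numerator over `2^m`), so these binary expansions of `r` determine `|A|`, hence `A`.
-/

lemma restrict_card_eq_of_prec {A B : Finset ℕ} (h : Prec A B) : restrict B A.card = A := by
  obtain ⟨hsub, -, hlt⟩ := h
  have hsort : B.sort (· ≤ ·) = A.sort (· ≤ ·) ++ (B \ A).sort (· ≤ ·) := by
    refine List.Perm.eq_of_pairwise' (B.pairwise_sort _) ?_ ?_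
    · refine List.pairwise_append.2 ⟨A.pairwise_sort _, (B \ A).pairwise_sort _, ?_⟩
      simp only [Finset.mem_sort, Finset.mem_sdiff]
      exact fun a ha b hb => (hlt a ha b hb.1 hb.2).le
    · refine List.perm_of_nodup_nodup_toFinset_eq (B.sort_nodup _) ?_ ?_
      · exact List.nodup_append.2 ⟨A.sort_nodup _, (B \ A).sort_nodup _,
          by simp only [Finset.mem_sort, Finset.mem_sdiff]; grind⟩
      · simp [Finset.sort_toFinset, Finset.union_sdiff_of_subset hsub]
  rw [restrict, hsort, List.take_left' (A.length_sort _), Finset.sort_toFinset]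

lemma factorization_two_odd_mul_two_pow {a : ℕ} (ha : Odd a) (n : ℕ) :
    (a * 2 ^ n).factorization 2 = n := by
  rw [Nat.factorization_mul ha.pos.ne' (by positivity), Finsupp.add_apply,
    Nat.factorization_eq_zero_of_not_dvd ha.not_two_dvd_nat,
    Nat.Prime.factorization_pow Nat.prime_two]
  simp

lemma mem_Bset_succ_iff {m : ℕ} {r : ℝ} :
    r ∈ Bset (m + 1) ↔ ∃ N : ℕ, Odd N ∧ N < 2 ^ (m + 1) ∧ r = N / 2 ^ (m + 1) := by
  constructor
  · rintro ⟨i, hi1, hi2, rfl⟩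
    refine ⟨2 * i - 1, ⟨i - 1, by omega⟩, by rw [pow_succ]; omega, ?_⟩
    rw [Nat.cast_sub (by omega)]
    push_cast
    ring
  · rintro ⟨N, ⟨c, rfl⟩, hN, rfl⟩
    refine ⟨c + 1, by omega, by rw [pow_succ] at hN; omega, ?_⟩
    push_cast
    ring

lemma not_mem_Bset_zero_of_mem_Bset_succ {m : ℕ} {r : ℝ} (hr : r ∈ Bset (m + 1)) :
    r ∉ Bset 0 := by
  obtain ⟨N, hN, hlt, rfl⟩ := mem_Bset_succ_iff.1 hr
  have hpos : (0 : ℝ) < 2 ^ (m + 1) := by positivity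
  rintro (h | h)
  · rw [div_eq_zero_iff] at h
    exact hN.pos.ne' (by exact_mod_cast h.resolve_right hpos.ne')
  · rw [Set.mem_singleton_iff, div_eq_one_iff_eq hpos.ne'] at h
    exact hlt.ne (by exact_mod_cast h)

lemma eq_of_mem_Bset {m n : ℕ} {r : ℝ} (hm : r ∈ Bset m) (hn : r ∈ Bset n) : m = n := by
  rcases m with _ | m <;> rcases n with _ | n
  · rfl
  · exact absurd hm (not_mem_Bset_zero_of_mem_Bset_succ hn)
  · exact absurd hn (not_mem_Bset_zero_of_mem_Bset_succ hm)
  · obtain ⟨M, hM, -, rfl⟩ := mem_Bset_succ_iff.1 hm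
    obtain ⟨N, hN, -, h⟩ := mem_Bset_succ_iff.1 hn
    rw [div_eq_div_iff (by positivity) (by positivity)] at h
    have h' : M * 2 ^ (n + 1) = N * 2 ^ (m + 1) := by exact_mod_cast h
    have := congrArg (·.factorization 2) h'
    simp only [factorization_two_odd_mul_two_pow hM, factorization_two_odd_mul_two_pow hN] at this
    omega

noncomputable def binarySum (σ : ℕ → ℕ) (n : ℕ) : ℝ :=
  ∑ i ∈ Finset.Icc 1 n, (σ i : ℝ) * (1 / 2 : ℝ) ^ i

section binarySum

variable {σ : ℕ → ℕ}

lemma binarySum_zero : binarySum σ 0 = 0 := rfl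

lemma binarySum_succ (n : ℕ) :
    binarySum σ (n + 1) = binarySum σ n + σ (n + 1) * (1 / 2 : ℝ) ^ (n + 1) :=
  Finset.sum_Icc_succ_top (by omega) _

lemma exists_binarySum_eq_div (hσ : ∀ i, σ i ≤ 1) (n : ℕ) :
    ∃ N : ℕ, N < 2 ^ n ∧ binarySum σ n = N / 2 ^ n := by
  induction n with
  | zero => exact ⟨0, by simp, by simp [binarySum_zero]⟩
  | succ n ih =>
    obtain ⟨N, hN, hsum⟩ := ih
    refine ⟨2 * N + σ (n + 1), by rw [pow_succ]; linarith [hσ (n + 1)], ?_⟩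
    rw [binarySum_succ, hsum, one_div_pow]
    push_cast
    field_simp
    ring

lemma binarySum_add_mem_Bset (hσ : ∀ i, σ i ≤ 1) (n : ℕ) :
    binarySum σ n + (1 / 2 : ℝ) ^ (n + 1) ∈ Bset (n + 1) := by
  obtain ⟨N, hN, hsum⟩ := exists_binarySum_eq_div hσ n
  refine mem_Bset_succ_iff.2 ⟨2 * N + 1, odd_two_mul_add_one N, by rw [pow_succ]; omega, ?_⟩
  rw [hsum, one_div_pow]
  push_cast
  field_simp
  ring

lemma binarySum_eq_of_forall_eq_zero {m n : ℕ} (hmn : m ≤ n)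
    (h : ∀ i, m < i → i ≤ n → σ i = 0) : binarySum σ n = binarySum σ m := by
  induction n, hmn using Nat.le_induction with
  | base => rfl
  | succ n hmn ih =>
    rw [binarySum_succ, h (n + 1) (by omega) le_rfl, ih fun i hi hin => h i hi (by omega)]
    simp

lemma binarySum_add_eq_of_forall_eq_one {m n : ℕ} (hmn : m ≤ n)
    (h : ∀ i, m < i → i ≤ n → σ i = 1) :
    binarySum σ n + (1 / 2 : ℝ) ^ n = binarySum σ m + (1 / 2 : ℝ) ^ m := by
  induction n, hmn using Nat.le_induction with
  | base => rfl
  | succ n hmn ih =>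
    rw [binarySum_succ, h (n + 1) (by omega) le_rfl, ← ih fun i hi hin => h i hi (by omega)]
    push_cast
    ring

end binarySum

lemma Gk_adj_iff_of_card_eq {k : ℕ} {u v : Vert k} (hv : v.1.1.card = k) :
    (Gk k).Adj u v ↔ Prec u.1.1 v.1.1 ∧ |u.1.2 - v.1.2| = (1 / 2 : ℝ) ^ k := by
  refine and_congr_left' (or_iff_left fun hvu => ?_)
  have := u.2.1
  have := hvu.2.1
  omega

section neighbours

variable {k : ℕ} {σ : ℕ → ℕ} {A B : Finset ℕ} {r : ℝ}

lemma lower_neighbour (hσ : ∀ i, σ i = 0 ∨ σ i = 1) (hk : 1 ≤ k) (hσk : σ k = 1)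
    (hr : r = binarySum σ k - (1 / 2 : ℝ) ^ k) (hrA : r ∈ Bset A.card)
    (hAB : restrict B A.card = A) :
    (∃ im : ℕ, 1 ≤ im ∧ im ≤ k - 1 ∧ σ im = 1 ∧ (∀ i : ℕ, im < i → i ≤ k - 1 → σ i ≠ 1) ∧
        A = restrict B im ∧ r = binarySum σ im) ∨
      ((∀ i : ℕ, 1 ≤ i → i ≤ k - 1 → σ i ≠ 1) ∧ A = ∅ ∧ r = 0) := by
  obtain ⟨im, him⟩ : ∃ im, Nat.findGreatest (fun i => σ i = 1) (k - 1) = im := ⟨_, rfl⟩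
  obtain ⟨him_le, him_spec, him_max⟩ := Nat.findGreatest_eq_iff.1 him
  have hr_im : r = binarySum σ im := by
    obtain ⟨j, rfl⟩ : ∃ j, k = j + 1 := ⟨k - 1, by omega⟩
    rw [Nat.add_sub_cancel] at him_le him_max
    rw [hr, binarySum_succ, hσk, binarySum_eq_of_forall_eq_zero him_le
      fun i hi hik => (hσ i).resolve_right (him_max hi hik)]
    simp
  rcases Nat.eq_zero_or_pos im with rfl | him_pos
  · have hr0 : r = 0 := by rw [hr_im, binarySum_zero]
    have hA : A.card = 0 := eq_of_mem_Bset hrA (by rw [hr0]; exact Or.inl rfl)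
    exact Or.inr ⟨him_max, Finset.card_eq_zero.1 hA, hr0⟩
  · obtain ⟨j, rfl⟩ : ∃ j, im = j + 1 := ⟨im - 1, by omega⟩
    have hσim : σ (j + 1) = 1 := him_spec (by omega)
    have hA : A.card = j + 1 := by
      refine eq_of_mem_Bset hrA ?_
      rw [hr_im, binarySum_succ, hσim, Nat.cast_one, one_mul]
      exact binarySum_add_mem_Bset (fun i => by rcases hσ i with h | h <;> omega) j
    exact Or.inl ⟨j + 1, him_pos, him_le, hσim, him_max, by rw [← hAB, hA], hr_im⟩

lemma upper_neighbour (hσ : ∀ i, σ i = 0 ∨ σ i = 1) (hk : 1 ≤ k) (hσk : σ k = 1)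
    (hr : r = binarySum σ k + (1 / 2 : ℝ) ^ k) (hrA : r ∈ Bset A.card)
    (hAB : restrict B A.card = A) :
    (∃ ip : ℕ, 1 ≤ ip ∧ ip ≤ k - 1 ∧ σ ip = 0 ∧ (∀ i : ℕ, ip < i → i ≤ k - 1 → σ i ≠ 0) ∧
        A = restrict B ip ∧ r = binarySum σ (ip - 1) + (1 / 2 : ℝ) ^ ip) ∨
      ((∀ i : ℕ, 1 ≤ i → i ≤ k - 1 → σ i ≠ 0) ∧ A = ∅ ∧ r = 1) := by
  obtain ⟨ip, hip⟩ : ∃ ip, Nat.findGreatest (fun i => σ i = 0) (k - 1) = ip := ⟨_, rfl⟩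
  obtain ⟨hip_le, hip_spec, hip_max⟩ := Nat.findGreatest_eq_iff.1 hip
  have htail : ∀ i, ip < i → i ≤ k → σ i = 1 := by
    intro i hi hik
    rcases eq_or_lt_of_le hik with rfl | hik
    · exact hσk
    · exact (hσ i).resolve_left (hip_max hi (by omega))
  have hr_ip : r = binarySum σ ip + (1 / 2 : ℝ) ^ ip := by
    rw [hr, binarySum_add_eq_of_forall_eq_one (by omega) htail]
  rcases Nat.eq_zero_or_pos ip with rfl | hip_pos
  · have hr1 : r = 1 := by rw [hr_ip, binarySum_zero, pow_zero, zero_add]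
    have hA : A.card = 0 := eq_of_mem_Bset hrA (by rw [hr1]; exact Or.inr rfl)
    exact Or.inr ⟨hip_max, Finset.card_eq_zero.1 hA, hr1⟩
  · obtain ⟨j, rfl⟩ : ∃ j, ip = j + 1 := ⟨ip - 1, by omega⟩
    have hσip : σ (j + 1) = 0 := hip_spec (by omega)
    have hr_j : r = binarySum σ j + (1 / 2 : ℝ) ^ (j + 1) := by
      rw [hr_ip, binarySum_succ, hσip, Nat.cast_zero, zero_mul, add_zero]
    have hA : A.card = j + 1 := by
      refine eq_of_mem_Bset hrA ?_
      rw [hr_j]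
      exact binarySum_add_mem_Bset (fun i => by rcases hσ i with h | h <;> omega) j
    exact Or.inl ⟨j + 1, hip_pos, hip_le, hσip, hip_max, by rw [← hAB, hA], hr_j⟩

end neighbours

theorem adj_maximal_iff_general (k : ℕ)
    (B : Finset ℕ) (s : ℝ) (hB : IsVertex k (B, s)) (hBk : B.card = k)
    (σ : ℕ → ℕ) (hσ01 : ∀ i, σ i = 0 ∨ σ i = 1) (hσk : σ k = 1)
    (hs : s = ∑ i ∈ Finset.Icc 1 k, (σ i : ℝ) * (1/2 : ℝ) ^ i)
    (A : Finset ℕ) (r : ℝ) (hA : IsVertex k (A, r)) :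
    (Gk k).Adj ⟨(A, r), hA⟩ ⟨(B, s), hB⟩ ↔
      (Prec A B ∧
        ((r = s - (1/2 : ℝ) ^ k ∧
          ((∃ im : ℕ, 1 ≤ im ∧ im ≤ k - 1 ∧ σ im = 1 ∧
              (∀ i : ℕ, im < i → i ≤ k - 1 → σ i ≠ 1) ∧
              A = restrict B im ∧
              r = ∑ i ∈ Finset.Icc 1 im, (σ i : ℝ) * (1/2 : ℝ) ^ i) ∨
            ((∀ i : ℕ, 1 ≤ i → i ≤ k - 1 → σ i ≠ 1) ∧ A = ∅ ∧ r = 0))) ∨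
         (r = s + (1/2 : ℝ) ^ k ∧
          ((∃ ip : ℕ, 1 ≤ ip ∧ ip ≤ k - 1 ∧ σ ip = 0 ∧
              (∀ i : ℕ, ip < i → i ≤ k - 1 → σ i ≠ 0) ∧
              A = restrict B ip ∧
              r = (∑ i ∈ Finset.Icc 1 (ip - 1), (σ i : ℝ) * (1/2 : ℝ) ^ i)
                    + (1/2 : ℝ) ^ ip) ∨
            ((∀ i : ℕ, 1 ≤ i → i ≤ k - 1 → σ i ≠ 0) ∧ A = ∅ ∧ r = 1))))) := by
  refine (Gk_adj_iff_of_card_eq (v := ⟨(B, s), hB⟩) hBk).trans (and_congr_right fun hAB => ?_)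
  have hk : 1 ≤ k := hBk ▸ Nat.one_le_of_lt hAB.2.1
  have hs' : s = binarySum σ k := hs
  have hrestrict := restrict_card_eq_of_prec hAB
  have hpos : (0 : ℝ) < (1 / 2) ^ k := by positivity
  constructor
  · intro hdist
    rcases (abs_eq hpos.le).1 hdist with h | h
    · exact Or.inr ⟨by linarith,
        upper_neighbour hσ01 hk hσk (by rw [← hs']; linarith) hA.2 hrestrict⟩
    · exact Or.inl ⟨by linarith,
        lower_neighbour hσ01 hk hσk (by rw [← hs']; linarith) hA.2 hrestrict⟩
  · rintro (⟨rfl, -⟩ | ⟨rfl, -⟩)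
    · rw [sub_sub_cancel_left, abs_neg, abs_of_pos hpos]
    · rw [add_sub_cancel_left, abs_of_pos hpos]

/-- Characterization of the edges of `G_k` incident to a vertex
`(B,s)` with `|B| = k`, in terms of the binary expansion `s = Σ_{i=1}^k σ_i 2^{−i}`
(with `σ_k = 1`). -/
theorem adj_maximal_iff (k : ℕ) (hk : 1 ≤ k)
    (B : Finset ℕ) (s : ℝ) (hB : IsVertex k (B, s)) (hBk : B.card = k)
    (σ : ℕ → ℕ) (hσ01 : ∀ i, σ i = 0 ∨ σ i = 1) (hσk : σ k = 1)
    (hs : s = ∑ i ∈ Finset.Icc 1 k, (σ i : ℝ) * (1/2 : ℝ) ^ i)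
    (A : Finset ℕ) (r : ℝ) (hA : IsVertex k (A, r)) :
    (Gk k).Adj ⟨(A, r), hA⟩ ⟨(B, s), hB⟩ ↔
      (Prec A B ∧
        ((r = s - (1/2 : ℝ) ^ k ∧
          ((∃ im : ℕ, 1 ≤ im ∧ im ≤ k - 1 ∧ σ im = 1 ∧
              (∀ i : ℕ, im < i → i ≤ k - 1 → σ i ≠ 1) ∧
              A = restrict B im ∧
              r = ∑ i ∈ Finset.Icc 1 im, (σ i : ℝ) * (1/2 : ℝ) ^ i) ∨
            ((∀ i : ℕ, 1 ≤ i → i ≤ k - 1 → σ i ≠ 1) ∧ A = ∅ ∧ r = 0))) ∨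
         (r = s + (1/2 : ℝ) ^ k ∧
          ((∃ ip : ℕ, 1 ≤ ip ∧ ip ≤ k - 1 ∧ σ ip = 0 ∧
              (∀ i : ℕ, ip < i → i ≤ k - 1 → σ i ≠ 0) ∧
              A = restrict B ip ∧
              r = (∑ i ∈ Finset.Icc 1 (ip - 1), (σ i : ℝ) * (1/2 : ℝ) ^ i)
                    + (1/2 : ℝ) ^ ip) ∨
            ((∀ i : ℕ, 1 ≤ i → i ≤ k - 1 → σ i ≠ 0) ∧ A = ∅ ∧ r = 1))))) :=
  adj_maximal_iff_general k B s hB hBk σ hσ01 hσk hs A r hA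

end DiamondPaper
end

section
/- Let Y be a Banach space whose norm is asymptotically midpoint uniformly convex. Then for every λ ∈ (0,1), every t ∈ (0,1), and all x, y ∈ Y, there exists a finite subset S of Y such that Bar_λ(x, y, δ̃_Y(t)/4) ⊆ S + 4t·max{λ, 1−λ}·‖x−y‖·B_Y. -/
/-! Write `v = x - y`, `d = ‖v‖` and `δ = δ̃_Y(t)/4`. For `z₁, z₂` in the barycenter set, the
triangle inequality through `x` and `y` gives `‖v ± (z₁ - z₂)‖ ≤ (1 + δ) d`, and by convexity
the same holds for `v ± α (z₁ - z₂)`, `|α| ≤ 1`. Asymptotic midpoint uniform convexity at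
`v / d` provides a closed finite-codimensional subspace `Z` on whose vectors `w` of norm `t d`
one has `max ‖v ± w‖ ≥ (1 + 3δ) d`. Hence if `z₁ - z₂` is within `δ d` of some `w ∈ Z`, then
`‖w‖ ≤ t d`, so two points of the barycenter set that are close in the finite-dimensional
quotient `Y ⧸ Z` are within `2 t d` of each other. The barycenter set is bounded, so its image
in `Y ⧸ Z` is relatively compact and a finite net there pulls back to the required finite set. -/

namespace DiamondPaper

/-- The modulus of asymptotic midpoint uniform convexity with respect to an
(equivalent) norm `N` on `Y`. -/
noncomputable def amucWith (Y : Type*) [NormedAddCommGroup Y] [NormedSpace ℝ Y]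
    (N : Y → ℝ) (t : ℝ) : ℝ :=
  (⨅ y : {y : Y // N y = 1},
    ⨆ Z : {Z : Submodule ℝ Y // IsClosed (Z : Set Y) ∧ FiniteDimensional ℝ (Y ⧸ Z)},
      ⨅ z : {z : Y // z ∈ Z.1 ∧ N z = 1},
        max (N (y.1 + t • z.1)) (N (y.1 - t • z.1))) - 1

/-- The modulus of asymptotic midpoint uniform convexity of the norm of `Y`. -/
noncomputable def amuc (Y : Type*) [NormedAddCommGroup Y] [NormedSpace ℝ Y]
    (t : ℝ) : ℝ :=
  amucWith Y (fun y => ‖y‖) t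

/-- The `δ`-approximate metric `λ`-barycenter set between `x` and `y`. -/
def Bar {Y : Type*} [NormedAddCommGroup Y] (lam : ℝ) (x y : Y) (δ : ℝ) : Set Y :=
  {z | max (‖x - z‖ / lam) (‖z - y‖ / (1 - lam)) ≤ (1 + δ) * ‖x - y‖}

lemma exists_finset_subset_iUnion_closedBall_of_isCompact_closure_image
    {X Q : Type*} [PseudoMetricSpace X] [PseudoMetricSpace Q] {f : X → Q} {A : Set X}
    (hA : IsCompact (closure (f '' A))) {ε r : ℝ} (hε : 0 < ε)
    (hf : ∀ a ∈ A, ∀ b ∈ A, dist (f a) (f b) < ε → dist a b ≤ r) :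
    ∃ S : Finset X, A ⊆ ⋃ s ∈ S, Metric.closedBall s r := by
  obtain ⟨T, hTA, hT, hcover⟩ :=
    Set.exists_subset_image_finite_and.mp (exists_finite_cover_balls_of_isCompact_closure hA hε)
  refine ⟨hT.toFinset, fun a ha => ?_⟩
  obtain ⟨_, ⟨s, hs, rfl⟩, has⟩ := Set.mem_iUnion₂.mp (hcover (Set.mem_image_of_mem f ha))
  exact Set.mem_iUnion₂.mpr ⟨s, hT.mem_toFinset.mpr hs, hf a ha s (hTA hs) has⟩

section Normed

variable {E : Type*} [SeminormedAddCommGroup E] [NormedSpace ℝ E]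

lemma norm_add_smul_le_of_norm_add_le_of_norm_sub_le {v u : E} {r α : ℝ}
    (hadd : ‖v + u‖ ≤ r) (hsub : ‖v - u‖ ≤ r) (hα : |α| ≤ 1) : ‖v + α • u‖ ≤ r := by
  obtain ⟨hα₁, hα₂⟩ := abs_le.mp hα
  have hmem := convex_closedBall (0 : E) r (mem_closedBall_zero_iff.mpr hadd)
    (mem_closedBall_zero_iff.mpr hsub) (by linarith : 0 ≤ (1 + α) / 2)
    (by linarith : 0 ≤ (1 - α) / 2) (by ring)
  rwa [mem_closedBall_zero_iff,
    show ((1 + α) / 2) • (v + u) + ((1 - α) / 2) • (v - u) = v + α • u by module] at hmem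

lemma norm_le_of_forall_le_max_norm {Z : Submodule ℝ E} {v u w : E} {t δ : ℝ} (ht : 0 ≤ t)
    (hZ : ∀ w ∈ Z, ‖w‖ = t * ‖v‖ → (1 + 3 * δ) * ‖v‖ ≤ max ‖v + w‖ ‖v - w‖)
    (hadd : ‖v + u‖ ≤ (1 + δ) * ‖v‖) (hsub : ‖v - u‖ ≤ (1 + δ) * ‖v‖)
    (hw : w ∈ Z) (huw : ‖u - w‖ < δ * ‖v‖) : ‖w‖ ≤ t * ‖v‖ := by
  by_contra! hlt
  have hw0 : 0 < ‖w‖ := (mul_nonneg ht (norm_nonneg v)).trans_lt hlt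
  set α := t * ‖v‖ / ‖w‖
  have hα0 : 0 ≤ α := by positivity
  have hα : |α| ≤ 1 := by rw [abs_of_nonneg hα0, div_le_one hw0]; exact hlt.le
  have hnear : ∀ β : ℝ, |β| ≤ 1 → ‖v + β • w‖ < (1 + 2 * δ) * ‖v‖ := fun β hβ => calc
    ‖v + β • w‖ = ‖(v + β • u) - β • (u - w)‖ := by congr 1; module
    _ ≤ ‖v + β • u‖ + |β| * ‖u - w‖ := by
      rw [← Real.norm_eq_abs, ← norm_smul]; exact norm_sub_le _ _
    _ ≤ (1 + δ) * ‖v‖ + 1 * ‖u - w‖ :=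
      add_le_add (norm_add_smul_le_of_norm_add_le_of_norm_sub_le hadd hsub hβ)
        (mul_le_mul_of_nonneg_right hβ (norm_nonneg _))
    _ < (1 + 2 * δ) * ‖v‖ := by linarith
  have hαw : ‖α • w‖ = t * ‖v‖ := by
    rw [norm_smul, Real.norm_eq_abs, abs_of_nonneg hα0, div_mul_cancel₀ _ hw0.ne']
  have hfar := hZ (α • w) (Z.smul_mem α hw) hαw
  have hminus := hnear (-α) (by rwa [abs_neg])
  rw [neg_smul, ← sub_eq_add_neg] at hminus
  linarith [hfar.trans_lt (max_lt (hnear α hα) hminus), norm_nonneg (u - w)]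

end Normed

section Bar

variable {Y : Type*} [NormedAddCommGroup Y] {lam δ : ℝ} {x y z : Y}

lemma norm_sub_le_of_mem_Bar (hlam0 : 0 < lam) (hlam1 : lam < 1) (hz : z ∈ Bar lam x y δ) :
    ‖x - z‖ ≤ lam * ((1 + δ) * ‖x - y‖) ∧ ‖z - y‖ ≤ (1 - lam) * ((1 + δ) * ‖x - y‖) := by
  rwa [Bar, Set.mem_ofPred_eq, max_le_iff, div_le_iff₀' hlam0, div_le_iff₀' (sub_pos.mpr hlam1)]
    at hz

lemma norm_sub_add_sub_le_of_mem_Bar (hlam0 : 0 < lam) (hlam1 : lam < 1) {z₁ z₂ : Y}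
    (hz₁ : z₁ ∈ Bar lam x y δ) (hz₂ : z₂ ∈ Bar lam x y δ) :
    ‖x - y + (z₁ - z₂)‖ ≤ (1 + δ) * ‖x - y‖ := calc
  ‖x - y + (z₁ - z₂)‖ = ‖(x - z₂) + (z₁ - y)‖ := by congr 1; abel
  _ ≤ ‖x - z₂‖ + ‖z₁ - y‖ := norm_add_le _ _
  _ ≤ lam * ((1 + δ) * ‖x - y‖) + (1 - lam) * ((1 + δ) * ‖x - y‖) :=
    add_le_add (norm_sub_le_of_mem_Bar hlam0 hlam1 hz₂).1
      (norm_sub_le_of_mem_Bar hlam0 hlam1 hz₁).2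
  _ = (1 + δ) * ‖x - y‖ := by ring

lemma isBounded_Bar (hlam0 : 0 < lam) (hlam1 : lam < 1) :
    Bornology.IsBounded (Bar lam x y δ) :=
  Metric.isBounded_closedBall.subset fun z hz => by
    rw [Metric.mem_closedBall, dist_comm, dist_eq_norm]
    exact (norm_sub_le_of_mem_Bar hlam0 hlam1 hz).1

end Bar

section AMUC

variable {Y : Type*} [NormedAddCommGroup Y] [NormedSpace ℝ Y]

lemma exists_subspace_forall_le_max_norm_of_lt_amuc {t c : ℝ} (hc : c < amuc Y t + 1) {e : Y}
    (he : ‖e‖ = 1) :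
    ∃ Z : Submodule ℝ Y, IsClosed (Z : Set Y) ∧ FiniteDimensional ℝ (Y ⧸ Z) ∧
      ∀ w ∈ Z, ‖w‖ = 1 → c ≤ max ‖e + t • w‖ ‖e - t • w‖ := by
  have : Nonempty {Z : Submodule ℝ Y // IsClosed (Z : Set Y) ∧ FiniteDimensional ℝ (Y ⧸ Z)} :=
    ⟨⟨⊤, Submodule.top_coe (R := ℝ) (M := Y) ▸ isClosed_univ, inferInstance⟩⟩
  rw [amuc, amucWith, sub_add_cancel] at hc
  have hsup := hc.trans_le <| ciInf_le ⟨0, Set.forall_mem_range.mpr fun _ =>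
    Real.iSup_nonneg fun _ => Real.iInf_nonneg fun _ => (norm_nonneg _).trans (le_max_left _ _)⟩
    (⟨e, he⟩ : {y : Y // ‖y‖ = 1})
  obtain ⟨⟨Z, hZc, hZf⟩, hZ⟩ := exists_lt_of_lt_ciSup hsup
  refine ⟨Z, hZc, hZf, fun w hw hw1 => hZ.le.trans ?_⟩
  exact ciInf_le ⟨0, Set.forall_mem_range.mpr fun _ => (norm_nonneg _).trans (le_max_left _ _)⟩
    (⟨w, hw, hw1⟩ : {z : Y // z ∈ Z ∧ ‖z‖ = 1})

lemma exists_subspace_forall_le_max_norm_of_lt_amuc_of_ne_zero {t c : ℝ} (ht : 0 < t)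
    (hc : c < amuc Y t + 1) {v : Y} (hv : v ≠ 0) :
    ∃ Z : Submodule ℝ Y, IsClosed (Z : Set Y) ∧ FiniteDimensional ℝ (Y ⧸ Z) ∧
      ∀ w ∈ Z, ‖w‖ = t * ‖v‖ → c * ‖v‖ ≤ max ‖v + w‖ ‖v - w‖ := by
  have hv0 : 0 < ‖v‖ := norm_pos_iff.mpr hv
  have htv : 0 < t * ‖v‖ := mul_pos ht hv0
  obtain ⟨Z, hZc, hZf, hZ⟩ := exists_subspace_forall_le_max_norm_of_lt_amuc hc
    (norm_smul_inv_norm hv : ‖(‖v‖⁻¹ : ℝ) • v‖ = 1)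
  refine ⟨Z, hZc, hZf, fun w hw hwn => ?_⟩
  set ζ := (t * ‖v‖)⁻¹ • w
  have hunit : ‖ζ‖ = 1 := by
    rw [norm_smul, hwn, norm_inv, Real.norm_eq_abs, abs_of_pos htv, inv_mul_cancel₀ htv.ne']
  have hv' : ‖v‖ • (‖v‖⁻¹ • v) = v := smul_inv_smul₀ hv0.ne' v
  have hw' : ‖v‖ • (t • ζ) = w := by
    rw [smul_smul, smul_smul, mul_comm ‖v‖ t, mul_inv_cancel₀ htv.ne', one_smul]
  calc c * ‖v‖ = ‖v‖ * c := mul_comm _ _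
    _ ≤ ‖v‖ * max ‖‖v‖⁻¹ • v + t • ζ‖ ‖‖v‖⁻¹ • v - t • ζ‖ :=
      mul_le_mul_of_nonneg_left (hZ ζ (Z.smul_mem _ hw) hunit) hv0.le
    _ = max ‖‖v‖ • (‖v‖⁻¹ • v + t • ζ)‖ ‖‖v‖ • (‖v‖⁻¹ • v - t • ζ)‖ := by
      rw [norm_smul, norm_smul, norm_norm, mul_max_of_nonneg _ _ hv0.le]
    _ = max ‖v + w‖ ‖v - w‖ := by rw [smul_add, smul_sub, hv', hw']

lemma exists_finset_Bar_subset_iUnion_closedBall {lam t δ : ℝ} (hlam0 : 0 < lam)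
    (hlam1 : lam < 1) (ht : 0 < t) (hδ : 0 < δ) (hamuc : 1 + 3 * δ < amuc Y t + 1) (x y : Y) :
    ∃ S : Finset Y, Bar lam x y δ ⊆ ⋃ s ∈ S, Metric.closedBall s (2 * t * ‖x - y‖) := by
  rcases eq_or_ne x y with rfl | hxy
  · refine ⟨{x}, fun z hz => Set.mem_iUnion₂.mpr ⟨x, Finset.mem_singleton_self x, ?_⟩⟩
    have hxz := (norm_sub_le_of_mem_Bar hlam0 hlam1 hz).1
    rw [sub_self, norm_zero, mul_zero, mul_zero] at hxz
    rwa [sub_self, norm_zero, mul_zero, Metric.mem_closedBall, dist_comm, dist_eq_norm]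
  obtain ⟨Z, hZc, hZf, hZ⟩ :=
    exists_subspace_forall_le_max_norm_of_lt_amuc_of_ne_zero ht hamuc (sub_ne_zero.mpr hxy)
  -- the norm on `Y ⧸ Z` is a norm (not just a seminorm) only through this instance
  have : IsClosed (Z : Set Y) := hZc
  have hd : 0 < ‖x - y‖ := norm_pos_iff.mpr (sub_ne_zero.mpr hxy)
  have hcompact : IsCompact (closure (Z.mkQL '' Bar lam x y δ)) :=
    (Z.mkQL.lipschitz.isBounded_image (isBounded_Bar hlam0 hlam1)).isCompact_closure
  refine exists_finset_subset_iUnion_closedBall_of_isCompact_closure_image hcompact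
    (lt_min (mul_pos hδ hd) (mul_pos ht hd)) fun z₁ hz₁ z₂ hz₂ hq => ?_
  rw [dist_eq_norm, ← map_sub, Submodule.mkQL_apply, Submodule.mkQ_apply] at hq
  obtain ⟨m, hm, hmε⟩ := Submodule.Quotient.norm_mk_lt (S := Z) _ (sub_pos.mpr hq)
  rw [add_sub_cancel] at hmε
  have hw : z₁ - z₂ - m ∈ Z := sub_mem_comm_iff.mp ((Submodule.Quotient.eq Z).mp hm)
  have hwt := norm_le_of_forall_le_max_norm ht.le hZ
    (norm_sub_add_sub_le_of_mem_Bar hlam0 hlam1 hz₁ hz₂)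
    (by rw [sub_eq_add_neg, neg_sub]; exact norm_sub_add_sub_le_of_mem_Bar hlam0 hlam1 hz₂ hz₁)
    hw (by rw [sub_sub_cancel]; exact hmε.trans_le (min_le_left _ _))
  rw [dist_eq_norm]
  calc ‖z₁ - z₂‖ ≤ ‖z₁ - z₂ - m‖ + ‖m‖ := norm_le_norm_sub_add _ _
    _ ≤ t * ‖x - y‖ + t * ‖x - y‖ := add_le_add hwt (hmε.le.trans (min_le_right _ _))
    _ = 2 * t * ‖x - y‖ := by ring

end AMUC

/-- If the norm of `Y` is asymptotically midpoint uniformly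
convex, then every approximate barycenter set `Bar_λ(x, y, δ̃_Y(t)/4)` is contained
in `S + 4t·max{λ,1−λ}·‖x−y‖·B_Y` for some finite set `S ⊆ Y`. -/
theorem bar_subset_finite_union_balls (Y : Type*) [NormedAddCommGroup Y]
    [NormedSpace ℝ Y] (hY : ∀ t ∈ Set.Ioo (0 : ℝ) 1, 0 < amuc Y t) :
    ∀ lam ∈ Set.Ioo (0 : ℝ) 1, ∀ t ∈ Set.Ioo (0 : ℝ) 1, ∀ x y : Y,
      ∃ S : Finset Y,
        Bar lam x y (amuc Y t / 4) ⊆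
          ⋃ s ∈ S, Metric.closedBall s (4 * t * max lam (1 - lam) * ‖x - y‖) := by
  intro lam ⟨hlam0, hlam1⟩ t ht x y
  have hamuc := hY t ht
  obtain ⟨S, hS⟩ := exists_finset_Bar_subset_iUnion_closedBall hlam0 hlam1 ht.1
    (by positivity : 0 < amuc Y t / 4) (by linarith) x y
  have hM : 1 ≤ 2 * max lam (1 - lam) := by
    linarith [le_max_left lam (1 - lam), le_max_right lam (1 - lam)]
  refine ⟨S, hS.trans (Set.iUnion₂_mono fun s _ => Metric.closedBall_subset_closedBall ?_)⟩
  calc 2 * t * ‖x - y‖ = 1 * (2 * t * ‖x - y‖) := (one_mul _).symm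
    _ ≤ 2 * max lam (1 - lam) * (2 * t * ‖x - y‖) := by have := ht.1; gcongr
    _ = 4 * t * max lam (1 - lam) * ‖x - y‖ := by ring

end DiamondPaper
end

section
/- Let G be a connected simple graph with shortest-path metric d_G and distinguished vertices v_b, v_t at finite distance h := d_G(v_b, v_t), and suppose that infinitely many vertices x of G satisfy d_G(v_b, x) + d_G(x, v_t) = h (as holds for any infinite bundle with finite height). Then there exists ρ > 0, depending only on G, such that for every Banach space Y whose norm is asymptotically midpoint uniformly convex, every C ≥ 1, and every map f from the vertices of G into Y satisfying d_G(x,y)/C ≤ ‖f(x) − f(y)‖ ≤ d_G(x,y) for all vertices x, y, one has ‖f(v_t) − f(v_b)‖ < (1 − (1/5)·δ̃_Y(1/(9ρC)))·h. -/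
/-! Take ρ = d(v_b, v_t) + 1 and write h = d(v_b, v_t), y = f v_t - f v_b. Infinitely many
vertices lie on geodesics from v_b to v_t, so infinitely many of them, forming a set S, lie at the
same distance from v_b; then d(v_t, b) + d(a, v_b) = h for a, b ∈ S, hence
‖y ± (f a - f b)‖ ≤ h. The points f a (a ∈ S) form an infinite, bounded, 1/C-separated set, so
modulo any closed subspace Z of finite codimension two of them nearly coincide: u = f a - f b is,
after normalisation, close to a unit vector of Z. Choosing Z from the definition of δ̃ at y/‖y‖
makes one of ‖y/‖y‖ ± t u/‖u‖‖ almost 1 + δ̃, while convexity of the ball of radius h keeps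
‖y ± τ u‖ ≤ h for the matching τ ≤ 1. So ‖y‖ (1 + 2δ̃/5) < h, incompatible with
‖y‖ ≥ (1 - δ̃/5) h. -/

namespace DiamondPaper

open Metric Set NormedSpace

theorem _root_.TotallyBounded.exists_ne_dist_lt {X α : Type*} [PseudoMetricSpace X]
    {s : Set X} (hs : TotallyBounded s) {T : Set α} (hT : T.Infinite) {f : α → X}
    (hf : MapsTo f T s) {ε : ℝ} (hε : 0 < ε) : ∃ p ∈ T, ∃ q ∈ T, p ≠ q ∧ dist (f p) (f q) < ε := by
  obtain ⟨c, hc, hcover⟩ := totallyBounded_iff.mp hs (ε / 2) (half_pos hε)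
  have hcenter : ∀ p ∈ T, ∃ x ∈ c, f p ∈ ball x (ε / 2) := fun p hp => by
    simpa using hcover (hf hp)
  obtain ⟨p₀, hp₀⟩ := hT.nonempty
  have : Nonempty X := ⟨f p₀⟩
  choose! g hgc hg using hcenter
  obtain ⟨p, hp, q, hq, hpq, hgpq⟩ := hT.exists_ne_map_eq_of_mapsTo hgc hc
  refine ⟨p, hp, q, hq, hpq, ?_⟩
  calc dist (f p) (f q) ≤ dist (f p) (g p) + dist (g q) (f q) := by
        rw [hgpq]; exact dist_triangle _ _ _
    _ < ε / 2 + ε / 2 := add_lt_add (hg p hp) (by rw [dist_comm]; exact hg q hq)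
    _ = ε := add_halves ε

section NormedSpace

variable {Y : Type*} [NormedAddCommGroup Y] [NormedSpace ℝ Y]

theorem exists_ne_sub_near_of_infinite (Z : Submodule ℝ Y) [IsClosed (Z : Set Y)]
    [FiniteDimensional ℝ (Y ⧸ Z)] {T : Set Y} (hT : T.Infinite) (hTb : Bornology.IsBounded T)
    {ε : ℝ} (hε : 0 < ε) : ∃ p ∈ T, ∃ q ∈ T, p ≠ q ∧ ∃ z ∈ Z, ‖p - q - z‖ < ε := by
  obtain ⟨R, hR⟩ := hTb.subset_closedBall 0
  have hmaps : MapsTo Z.mkQ T (closedBall 0 R) := fun p hp => by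
    simpa using
      (Submodule.Quotient.norm_mk_le Z p).trans (mem_closedBall_zero_iff.mp (hR hp))
  obtain ⟨p, hp, q, hq, hpq, hdist⟩ :=
    (isCompact_closedBall (0 : Y ⧸ Z) R).totallyBounded.exists_ne_dist_lt hT hmaps hε
  rw [dist_eq_norm, ← map_sub, Submodule.mkQ_apply] at hdist
  obtain ⟨m, hm, hmε⟩ := Submodule.Quotient.norm_mk_lt (S := Z) _ (sub_pos.mpr hdist)
  refine ⟨p, hp, q, hq, hpq, p - q - m, (Submodule.Quotient.eq Z).mp hm.symm, ?_⟩
  rw [sub_sub_cancel]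
  linarith

theorem norm_normalize_sub_normalize_le {x : Y} (hx : x ≠ 0) (y : Y) :
    ‖normalize x - normalize y‖ ≤ 2 * ‖x - y‖ / ‖x‖ := by
  have hx0 : 0 < ‖x‖ := norm_pos_iff.mpr hx
  rw [le_div_iff₀ hx0, mul_comm, ← norm_smul_of_nonneg hx0.le]
  have hny : ‖normalize y‖ ≤ 1 := by
    rcases eq_or_ne y 0 with rfl | hy
    · simp
    · exact (norm_normalize_eq_one_iff.mpr hy).le
  calc ‖‖x‖ • (normalize x - normalize y)‖
      = ‖(x - y) + (‖y‖ - ‖x‖) • normalize y‖ := by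
        rw [smul_sub, norm_smul_normalize, sub_smul, norm_smul_normalize]; congr 1; abel
    _ ≤ ‖x - y‖ + |‖y‖ - ‖x‖| * ‖normalize y‖ := by
        rw [← Real.norm_eq_abs, ← norm_smul]; exact norm_add_le _ _
    _ ≤ ‖x - y‖ + ‖x - y‖ * 1 := by
        gcongr
        rw [abs_sub_comm]; exact abs_norm_sub_norm_le x y
    _ = 2 * ‖x - y‖ := by ring

theorem max_norm_add_sub_le (y w z : Y) {t : ℝ} (ht : 0 ≤ t) :
    max ‖y + t • z‖ ‖y - t • z‖ ≤ max ‖y + t • w‖ ‖y - t • w‖ + t * ‖z - w‖ := by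
  have hdiff : ‖t • z - t • w‖ = t * ‖z - w‖ := by
    rw [← smul_sub, norm_smul, Real.norm_of_nonneg ht]
  apply max_le
  · calc ‖y + t • z‖ ≤ ‖y + t • w‖ + ‖(y + t • z) - (y + t • w)‖ :=
          norm_le_norm_add_norm_sub' _ _
      _ ≤ max ‖y + t • w‖ ‖y - t • w‖ + t * ‖z - w‖ := by
        rw [add_sub_add_left_eq_sub, hdiff]
        gcongr
        exact le_max_left _ _
  · calc ‖y - t • z‖ ≤ ‖y - t • w‖ + ‖(y - t • z) - (y - t • w)‖ :=
          norm_le_norm_add_norm_sub' _ _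
      _ ≤ max ‖y + t • w‖ ‖y - t • w‖ + t * ‖z - w‖ := by
        rw [sub_sub_sub_cancel_left, norm_sub_rev (t • w), hdiff]
        gcongr
        exact le_max_right _ _

theorem norm_le_of_norm_add_le_of_norm_sub_le {y u : Y} {h : ℝ} (h₁ : ‖y + u‖ ≤ h)
    (h₂ : ‖y - u‖ ≤ h) : ‖u‖ ≤ h := by
  have h₃ := norm_sub_le (y + u) (y - u)
  rw [show y + u - (y - u) = (2 : ℝ) • u by module, norm_smul, Real.norm_two] at h₃
  linarith

theorem norm_mul_norm_normalize_add (y w : Y) : ‖y‖ * ‖normalize y + w‖ = ‖y + ‖y‖ • w‖ := by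
  rw [← norm_smul_of_nonneg (norm_nonneg y), smul_add, norm_smul_normalize]

abbrev Cof (Y : Type*) [NormedAddCommGroup Y] [NormedSpace ℝ Y] :=
  {Z : Submodule ℝ Y // IsClosed (Z : Set Y) ∧ FiniteDimensional ℝ (Y ⧸ Z)}

instance : Nonempty (Cof Y) := ⟨⟨⊤, isClosed_univ, inferInstance⟩⟩

theorem amuc_add_one_le {y : Y} (hy : ‖y‖ = 1) (t : ℝ) :
    amuc Y t + 1 ≤
      ⨆ Z : Cof Y, ⨅ z : {z : Y // z ∈ Z.1 ∧ ‖z‖ = 1}, max ‖y + t • z.1‖ ‖y - t • z.1‖ := by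
  rw [amuc, amucWith, sub_add_cancel]
  refine ciInf_le ⟨0, forall_mem_range.2 fun y => ?_⟩ (⟨y, hy⟩ : {y : Y // ‖y‖ = 1})
  exact Real.iSup_nonneg fun _ => Real.iInf_nonneg fun _ => (norm_nonneg _).trans (le_max_left _ _)

theorem amuc_le_self [Nontrivial Y] {t : ℝ} (ht : 0 ≤ t) : amuc Y t ≤ t := by
  obtain ⟨y, hy⟩ := exists_norm_eq Y zero_le_one
  have hbound : ∀ z : Y, ‖z‖ = 1 → max ‖y + t • z‖ ‖y - t • z‖ ≤ 1 + t := fun z hz => by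
    have hyz : ‖y‖ + ‖t • z‖ = 1 + t := by rw [norm_smul_of_nonneg ht, hy, hz, mul_one]
    exact max_le (hyz ▸ norm_add_le _ _) (hyz ▸ norm_sub_le _ _)
  suffices amuc Y t + 1 ≤ 1 + t by linarith
  refine (amuc_add_one_le hy t).trans (ciSup_le fun Z => ?_)
  rcases isEmpty_or_nonempty {z : Y // z ∈ Z.1 ∧ ‖z‖ = 1} with hZ | ⟨⟨z⟩⟩
  · rw [Real.iInf_of_isEmpty]; linarith
  · exact ciInf_le_of_le
      ⟨0, forall_mem_range.2 fun _ => (norm_nonneg _).trans (le_max_left _ _)⟩ z (hbound z.1 z.2.2)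

theorem exists_cof_forall_lt_max_norm {y : Y} (hy : ‖y‖ = 1) (t : ℝ) {ε : ℝ} (hε : 0 < ε) :
    ∃ Z : Submodule ℝ Y, IsClosed (Z : Set Y) ∧ FiniteDimensional ℝ (Y ⧸ Z) ∧
      ∀ z ∈ Z, ‖z‖ = 1 → amuc Y t + 1 - ε < max ‖y + t • z‖ ‖y - t • z‖ := by
  obtain ⟨⟨Z, hZc, hZfd⟩, hZ⟩ :=
    exists_lt_of_lt_ciSup ((amuc_add_one_le hy t).trans_lt' (sub_lt_self _ hε))
  refine ⟨Z, hZc, hZfd, fun z hz hz1 => hZ.trans_le ?_⟩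
  exact ciInf_le ⟨0, forall_mem_range.2 fun _ => (norm_nonneg _).trans (le_max_left _ _)⟩
    (⟨z, hz, hz1⟩ : {z : Y // z ∈ Z ∧ ‖z‖ = 1})

theorem exists_cof_forall_near_lt_max_norm {y : Y} (hy : ‖y‖ = 1) {t : ℝ} (ht : 0 ≤ t)
    {η : ℝ} (hη : 0 < η) (hη1 : η ≤ 1) :
    ∃ Z : Submodule ℝ Y, IsClosed (Z : Set Y) ∧ FiniteDimensional ℝ (Y ⧸ Z) ∧
      ∀ u, ∀ z ∈ Z, ‖u - z‖ < η * ‖u‖ →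
        amuc Y t + 1 - (1 + 2 * t) * η < max ‖y + t • normalize u‖ ‖y - t • normalize u‖ := by
  obtain ⟨Z, hZc, hZfd, hZ⟩ := exists_cof_forall_lt_max_norm hy t hη
  refine ⟨Z, hZc, hZfd, fun u z hz huz => ?_⟩
  have hu : 0 < ‖u‖ := pos_of_mul_pos_right ((norm_nonneg _).trans_lt huz) hη.le
  have hz0 : z ≠ 0 := by
    rintro rfl
    rw [sub_zero] at huz
    exact (huz.trans_le (mul_le_of_le_one_left (norm_nonneg u) hη1)).false
  have hclose : ‖normalize z - normalize u‖ < 2 * η := by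
    rw [norm_sub_rev]
    refine (norm_normalize_sub_normalize_le (norm_pos_iff.mp hu) z).trans_lt ?_
    rw [div_lt_iff₀ hu]
    linarith
  have hZz := hZ (normalize z) (Z.smul_mem _ hz) (norm_normalize_eq_one_iff.mpr hz0)
  have := max_norm_add_sub_le y (normalize u) (normalize z) ht
  nlinarith

theorem norm_mul_max_norm_normalize_le {y u : Y} {h s : ℝ} (hs : 0 ≤ s) (hsu : ‖y‖ * s ≤ ‖u‖)
    (hy : ‖y‖ ≤ h) (hyu : ‖y + u‖ ≤ h) (hyu' : ‖y - u‖ ≤ h) :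
    ‖y‖ * max ‖normalize y + s • normalize u‖ ‖normalize y - s • normalize u‖ ≤ h := by
  set τ := ‖y‖ * s / ‖u‖
  have hτ : τ ∈ Icc (0 : ℝ) 1 := ⟨by positivity, div_le_one_of_le₀ hsu (norm_nonneg u)⟩
  have hscale : ‖y‖ • s • normalize u = τ • u := by
    simp only [NormedSpace.normalize, smul_smul, τ, div_eq_mul_inv, mul_assoc]
  have hball : ∀ v, ‖y + v‖ ≤ h → ‖y + τ • v‖ ≤ h := fun v hv => by
    simpa using
      (convex_closedBall (0 : Y) h).add_smul_mem (by simpa using hy) (by simpa using hv) hτ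
  rw [mul_max_of_nonneg _ _ (norm_nonneg y), norm_mul_norm_normalize_add, sub_eq_add_neg,
    norm_mul_norm_normalize_add, smul_neg, hscale, ← smul_neg]
  exact max_le (hball u hyu) (hball (-u) (by rwa [← sub_eq_add_neg]))

theorem norm_lt_of_infinite_separated {t h r : ℝ} (ht0 : 0 < t) (ht1 : t ≤ 1) (hr : 0 < r)
    (hth : t * h ≤ r) (hδ : 0 < amuc Y t) {y : Y} {T : Set Y} (hT : T.Infinite)
    (hsep : T.Pairwise fun p q => r ≤ ‖p - q‖)
    (hyT : ∀ p ∈ T, ∀ q ∈ T, ‖y + (p - q)‖ ≤ h) :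
    ‖y‖ < (1 - 1 / 5 * amuc Y t) * h := by
  set δ := amuc Y t
  have hyT' : ∀ p ∈ T, ∀ q ∈ T, ‖y - (p - q)‖ ≤ h := fun p hp q hq => by
    simpa [sub_eq_add_neg, add_comm] using hyT q hq p hp
  obtain ⟨p₀, hp₀, q₀, hq₀, hpq₀⟩ := hT.nontrivial
  have : Nontrivial Y := ⟨⟨p₀, q₀, hpq₀⟩⟩
  have hδ1 : δ ≤ 1 := (amuc_le_self ht0.le).trans ht1
  have hdiam : ∀ p ∈ T, ∀ q ∈ T, ‖p - q‖ ≤ h := fun p hp q hq =>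
    norm_le_of_norm_add_le_of_norm_sub_le (hyT p hp q hq) (hyT' p hp q hq)
  have hh : 0 < h := hr.trans_le ((hsep hp₀ hq₀ hpq₀).trans (hdiam p₀ hp₀ q₀ hq₀))
  have hTb : Bornology.IsBounded T :=
    (isBounded_closedBall (x := p₀) (r := h)).subset fun p hp => by
      rw [mem_closedBall, dist_eq_norm]; exact hdiam p hp p₀ hp₀
  have hyh : ‖y‖ ≤ h := by simpa using hyT p₀ hp₀ p₀ hp₀
  by_contra! hy
  have hy0 : 0 < ‖y‖ := lt_of_lt_of_le (by nlinarith) hy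
  obtain ⟨Z, hZc, hZfd, hZ⟩ := exists_cof_forall_near_lt_max_norm
    (norm_normalize_eq_one_iff.mpr (norm_pos_iff.mp hy0)) ht0.le (η := δ / 5) (by positivity)
    (by linarith)
  obtain ⟨p, hp, q, hq, hpq, z, hz, hpqz⟩ :=
    exists_ne_sub_near_of_infinite Z hT hTb (ε := δ / 5 * r) (by positivity)
  have hu : r ≤ ‖p - q‖ := hsep hp hq hpq
  set M := max ‖normalize y + t • normalize (p - q)‖ ‖normalize y - t • normalize (p - q)‖
  have hM : 1 + 2 / 5 * δ < M := by
    have := hZ (p - q) z hz (hpqz.trans_le (by gcongr))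
    nlinarith
  have hbound : ‖y‖ * M ≤ h := norm_mul_max_norm_normalize_le ht0.le (by nlinarith) hyh
    (hyT p hp q hq) (hyT' p hp q hq)
  have : h ≤ (1 - 1 / 5 * δ) * h * (1 + 2 / 5 * δ) := by nlinarith
  nlinarith [mul_le_mul_of_nonneg_right hy (by positivity : (0 : ℝ) ≤ 1 + 2 / 5 * δ),
    mul_lt_mul_of_pos_left hM hy0]

end NormedSpace

theorem _root_.SimpleGraph.exists_infinite_forall_dist_add_dist_eq {V : Type*}
    {G : SimpleGraph V} {u v : V} (h : {x | G.dist u x + G.dist x v = G.dist u v}.Infinite) :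
    ∃ S : Set V, S.Infinite ∧ ∀ a ∈ S, ∀ b ∈ S, G.dist u a + G.dist b v = G.dist u v := by
  obtain ⟨k, hk⟩ :
      ∃ k, ({x | G.dist u x + G.dist x v = G.dist u v} ∩ {x | G.dist u x = k}).Infinite := by
    by_contra! hfin
    refine h (((finite_Iic (G.dist u v)).biUnion fun k _ => hfin k).subset fun x hx => ?_)
    exact mem_biUnion (mem_Iic.mpr (Nat.le.intro hx)) ⟨hx, rfl⟩
  refine ⟨_, hk, fun a ha b hb => ?_⟩
  simp only [mem_inter_iff, mem_ofPred_eq] at ha hb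
  omega

/-- Let `G` be a connected graph with distinguished vertices
`v_b`, `v_t`, with infinitely many vertices `x` satisfying
`d(v_b,x) + d(x,v_t) = d(v_b,v_t)`. Then there is `ρ > 0`, depending only on `G`,
such that for every Banach space `Y` with AMUC norm, every `C ≥ 1` and every
non-expansive map `f` with compression at least `1/C`, one has
`‖f(v_t) − f(v_b)‖ < (1 − (1/5)·δ̃_Y(1/(9ρC)))·d(v_b,v_t)`. -/
theorem bundle_shrinking (V : Type) (G : SimpleGraph V) (hconn : G.Connected)
    (vb vt : V)
    (hinf : {x : V | G.dist vb x + G.dist x vt = G.dist vb vt}.Infinite) :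
    ∃ ρ : ℝ, 0 < ρ ∧
      ∀ (Y : Type) [NormedAddCommGroup Y] [NormedSpace ℝ Y],
        (∀ t ∈ Set.Ioo (0 : ℝ) 1, 0 < amuc Y t) →
        ∀ C : ℝ, 1 ≤ C → ∀ f : V → Y,
          (∀ x y : V, (G.dist x y : ℝ) / C ≤ ‖f x - f y‖ ∧
            ‖f x - f y‖ ≤ (G.dist x y : ℝ)) →
          ‖f vt - f vb‖ <
            (1 - (1/5 : ℝ) * amuc Y (1 / (9 * ρ * C))) * (G.dist vb vt : ℝ) := by
  obtain ⟨S, hS, hSdist⟩ := SimpleGraph.exists_infinite_forall_dist_add_dist_eq hinf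
  refine ⟨G.dist vb vt + 1, by positivity, fun Y _ _ hAMUC C hC f hf => ?_⟩
  have hC0 : 0 < C := by linarith
  have hsep : ∀ a b, a ≠ b → 1 / C ≤ ‖f a - f b‖ := fun a b hab =>
    (div_le_div_of_nonneg_right (by exact_mod_cast hconn.pos_dist_of_ne hab) hC0.le).trans
      (hf a b).1
  have ht : 1 / (9 * ((G.dist vb vt : ℝ) + 1) * C) ∈ Ioo (0 : ℝ) 1 :=
    ⟨by positivity, by rw [div_lt_one (by positivity)]; nlinarith⟩
  refine norm_lt_of_infinite_separated (T := f '' S) ht.1 ht.2.le (one_div_pos.mpr hC0) ?_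
    (hAMUC _ ht) (hS.image fun a _ b _ hab => ?_) ?_ ?_
  · rw [div_mul_eq_mul_div, one_mul, div_le_div_iff₀ (by positivity) hC0]
    nlinarith
  · by_contra hne
    exact (hsep a b hne).not_gt (by rw [hab, sub_self, norm_zero]; positivity)
  · rintro _ ⟨a, -, rfl⟩ _ ⟨b, -, rfl⟩ hab
    exact hsep a b (ne_of_apply_ne f hab)
  · rintro _ ⟨a, ha, rfl⟩ _ ⟨b, hb, rfl⟩
    calc ‖f vt - f vb + (f a - f b)‖ = ‖(f vt - f b) + (f a - f vb)‖ := by congr 1; abel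
      _ ≤ G.dist vt b + G.dist a vb :=
        (norm_add_le _ _).trans (add_le_add (hf _ _).2 (hf _ _).2)
      _ = G.dist vb vt := by
        rw [SimpleGraph.dist_comm (u := vt), SimpleGraph.dist_comm (u := a), add_comm]
        exact_mod_cast hSdist a ha b hb

end DiamondPaper
end

section
/- Let Y be a Banach space admitting an equivalent norm |·| (i.e., a·‖y‖ ≤ |y| ≤ b·‖y‖ for some a, b > 0 and all y ∈ Y) that is asymptotically midpoint uniformly convex. Then sup_{k∈ℕ} c_Y(G_k) = ∞; that is, for every D ≥ 1 there is k ∈ ℕ such that G_k admits no bi-Lipschitz embedding into Y with distortion at most D. If, moreover, the equivalent AMUC norm has power type p for some p ∈ (1,∞) — i.e., there is γ > 0 such that its modulus satisfies δ̃(t) ≥ γ·t^p for all t ∈ (0,1) — then there is a constant c > 0 such that c_Y(G_k) ≥ c·k^{1/p} for all k ≥ 1. -/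
/-!
Normalize a bi-Lipschitz embedding `g` of `G_k` so that it does not shrink distances and has
Lipschitz constant `D`, and let `σ_j` (`levelSup N g j`) be the largest `N`-length of `g u - g v`,
divided by `2 ^ j`, over the bottom `u` and top `v` of the copies of `G_j` inside `G_k`; thus
`a ≤ σ_j ≤ b D`. A copy of `G_{j+1}` has infinitely many midpoints, pairwise at graph distance
`2 ^ (j + 1)`, so their images form a uniformly separated sequence of approximate midpoints of the
images of its ends. Passing to the finite-dimensional quotient `Y ⧸ Z`, two of them differ by
almost a vector of `Z`, and asymptotic midpoint uniform convexity gives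
`(1 + δ̃(t)) σ_{j+1} ≤ σ_j` whenever `t σ_{j+1} < a`. Iterating over the `k` levels yields
`(1 + δ̃(t)) ^ k a ≤ b D` for fixed `t`, and, for a modulus of power type `p`, a gain of order
`D ^ (1 - p)` per level, whence `D ^ p ≳ k`.
-/

namespace DiamondPaper

/-- `f` is a bi-Lipschitz embedding of `G_k` into `Y` with distortion at most
`D`. -/
def EmbedsWith (k : ℕ) (Y : Type*) [NormedAddCommGroup Y] (D : ℝ) : Prop :=
  ∃ (s : ℝ) (f : Vert k → Y), 0 < s ∧
    ∀ x y : Vert k,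
      s * ((Gk k).dist x y : ℝ) ≤ ‖f x - f y‖ ∧
      ‖f x - f y‖ ≤ D * s * ((Gk k).dist x y : ℝ)

def IsInitialSegment (C F : Finset ℕ) : Prop :=
  C ⊆ F ∧ ∀ c ∈ C, ∀ f ∈ F, f ∉ C → c < f

theorem prec_iff {A B : Finset ℕ} : Prec A B ↔ IsInitialSegment A B ∧ A.card < B.card := by
  unfold Prec IsInitialSegment
  tauto

namespace IsInitialSegment

variable {C C' E F F' G : Finset ℕ}

theorem refl (C : Finset ℕ) : IsInitialSegment C C :=
  ⟨subset_rfl, fun _ _ _ hf hfC => absurd hf hfC⟩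

theorem trans (hCF : IsInitialSegment C F) (hFG : IsInitialSegment F G) :
    IsInitialSegment C G :=
  ⟨hCF.1.trans hFG.1, fun c hc g hg hgC =>
    if hgF : g ∈ F then hCF.2 c hc g hgF hgC else hFG.2 c (hCF.1 hc) g hg hgF⟩

theorem of_card_le (hC : IsInitialSegment C F) (hC' : IsInitialSegment C' F)
    (hcard : C.card ≤ C'.card) : IsInitialSegment C C' := by
  refine ⟨fun c hc => ?_, fun c hc f hf hfC => hC.2 c hc f (hC'.1 hf) hfC⟩
  by_contra hcC'
  -- every element of `C'` lies below `c`, hence in `C`, so `C' ⊆ C.erase c` is too small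
  have hsub : C' ⊆ C.erase c := fun x hx => by
    have hxc : x < c := hC'.2 x hx c (hC.1 hc) hcC'
    refine Finset.mem_erase.2 ⟨hxc.ne, ?_⟩
    by_contra hxC
    exact (hC.2 c hc x (hC'.1 hx) hxC).not_gt hxc
  have := Finset.card_le_card hsub
  rw [Finset.card_erase_of_mem hc] at this
  have := Finset.card_pos.2 ⟨c, hc⟩
  omega

theorem of_prec_or_prec (hC : IsInitialSegment C F) (hF : Prec F F' ∨ Prec F' F)
    (hcard : C.card ≤ F'.card) : IsInitialSegment C F' := by
  rcases hF with hF | hF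
  · exact hC.trans (prec_iff.1 hF).1
  · exact hC.of_card_le (prec_iff.1 hF).1 hcard

theorem insert_of_forall_lt {n : ℕ} (hn : ∀ e ∈ E, e < n) : IsInitialSegment E (insert n E) :=
  ⟨Finset.subset_insert n E, fun c hc f hf hfE => by
    rcases Finset.mem_insert.1 hf with rfl | hf
    · exact hn c hc
    · exact absurd hf hfE⟩

end IsInitialSegment

theorem exists_nat_eq_two_pow_mul_of_mem_Bset {m c : ℕ} {r : ℝ} (hr : r ∈ Bset m)
    (hmc : m ≤ c) : ∃ q : ℕ, 2 ^ c * r = q := by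
  rcases m with _ | m
  · rcases hr with rfl | rfl
    · exact ⟨0, by simp⟩
    · exact ⟨2 ^ c, by simp⟩
  · obtain ⟨i, hi, -, rfl⟩ := hr
    obtain ⟨e, rfl⟩ := Nat.exists_eq_add_of_le hmc
    refine ⟨(2 * i - 1) * 2 ^ e, ?_⟩
    rw [Nat.cast_mul, Nat.cast_sub (by omega), pow_add]
    push_cast
    field_simp

theorem lt_card_of_mem_Bset {m c i : ℕ} {r : ℝ} (hr : r ∈ Bset m)
    (hlo : (i : ℝ) < 2 ^ c * r) (hhi : 2 ^ c * r < i + 1) : c < m := by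
  by_contra! hmc
  obtain ⟨q, hq⟩ := exists_nat_eq_two_pow_mul_of_mem_Bset hr hmc
  rw [hq] at hlo hhi
  have : i < q := by exact_mod_cast hlo
  have : q < i + 1 := by exact_mod_cast hhi
  omega

section Walks

variable {k : ℕ}

theorem two_pow_mul_abs_sub_le_length {x y : Vert k} (w : (Gk k).Walk x y) :
    2 ^ k * |x.1.2 - y.1.2| ≤ w.length := by
  induction w with
  | nil => simp
  | @cons u v y huv w ih =>
    have hstep : 2 ^ k * |u.1.2 - v.1.2| = 1 := by
      rw [huv.2, ← mul_pow]
      norm_num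
    calc 2 ^ k * |u.1.2 - y.1.2| ≤ 2 ^ k * |u.1.2 - v.1.2| + 2 ^ k * |v.1.2 - y.1.2| := by
          rw [← mul_add]
          exact mul_le_mul_of_nonneg_left (abs_sub_le _ _ _) (by positivity)
      _ ≤ (w.cons huv).length := by
          rw [SimpleGraph.Walk.length_cons, hstep]
          push_cast
          linarith

theorem two_pow_mul_le_length_of_mem_support {x y z : Vert k} (w : (Gk k).Walk x y)
    (hz : z ∈ w.support) :
    2 ^ k * (|x.1.2 - z.1.2| + |z.1.2 - y.1.2|) ≤ w.length := by
  classical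
  rw [← w.take_spec hz, SimpleGraph.Walk.length_append, Nat.cast_add, mul_add]
  exact add_le_add (two_pow_mul_abs_sub_le_length _) (two_pow_mul_abs_sub_le_length _)

/-- The strip condition forces every visited vertex to have level `> c`. -/
theorem isInitialSegment_of_walk {c i : ℕ} {C : Finset ℕ} (hC : C.card = c + 1)
    {x y : Vert k} (w : (Gk k).Walk x y)
    (hw : ∀ z ∈ w.support, (i : ℝ) < 2 ^ c * z.1.2 ∧ 2 ^ c * z.1.2 < i + 1)
    (hx : IsInitialSegment C x.1.1) : IsInitialSegment C y.1.1 := by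
  induction w with
  | nil => exact hx
  | @cons u v y huv w ih =>
    have hw' : ∀ z ∈ w.support, (i : ℝ) < 2 ^ c * z.1.2 ∧ 2 ^ c * z.1.2 < i + 1 :=
      fun z hz => hw z (List.mem_cons_of_mem _ hz)
    have hv := hw' v w.start_mem_support
    have hcard : c < v.1.1.card := lt_card_of_mem_Bset v.2.2 hv.1 hv.2
    exact ih hw' (hx.of_prec_or_prec huv.1 (by omega))

end Walks

/-- `u` and `v` are the bottom and top of one of the copies of `G_j` making up `G_k`: the copy
lies over the dyadic interval `[i / 2 ^ |E|, (i + 1) / 2 ^ |E|]` and its vertex sets extend `E`. -/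
def IsSubDiamond (k j : ℕ) (u v : Vert k) : Prop :=
  ∃ (E : Finset ℕ) (i : ℕ), E.card + j = k ∧ i < 2 ^ E.card ∧
    2 ^ E.card * u.1.2 = i ∧ 2 ^ E.card * v.1.2 = i + 1 ∧
    IsInitialSegment u.1.1 E ∧ IsInitialSegment v.1.1 E ∧ (u.1.1.card ≠ v.1.1.card ∨ E = ∅)

section SubDiamond

variable {k j : ℕ} {u v : Vert k}

theorem IsSubDiamond.adj (hk : 1 ≤ k) (h : IsSubDiamond k 0 u v) : (Gk k).Adj u v := by
  obtain ⟨E, i, hE, -, hu, hv, huE, hvE, hne⟩ := h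
  rw [add_zero] at hE
  have hne : u.1.1.card ≠ v.1.1.card := hne.resolve_right fun h => by simp [h] at hE; omega
  refine ⟨?_, ?_⟩
  · rcases hne.lt_or_gt with hlt | hlt
    · exact Or.inl (prec_iff.2 ⟨huE.of_card_le hvE hlt.le, hlt⟩)
    · exact Or.inr (prec_iff.2 ⟨hvE.of_card_le huE hlt.le, hlt⟩)
  · rw [hE] at hu hv
    have hdiff : v.1.2 - u.1.2 = (1 / 2) ^ k := by
      rw [one_div_pow, eq_div_iff (by positivity)]
      linarith
    rw [abs_sub_comm, hdiff, abs_of_pos (by positivity)]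

theorem two_pow_le_length_of_not_subset {c i : ℕ} (hk : k = c + (j + 1)) {x y : Vert k}
    (hx : 2 ^ (c + 1) * x.1.2 = 2 * i + 1) (hy : y.1.2 = x.1.2) (hcard : x.1.1.card = c + 1)
    (hsub : ¬ x.1.1 ⊆ y.1.1) (w : (Gk k).Walk x y) : 2 ^ (j + 1) ≤ w.length := by
  by_cases hstrip : ∀ z ∈ w.support, (i : ℝ) < 2 ^ c * z.1.2 ∧ 2 ^ c * z.1.2 < i + 1
  · exact absurd (isInitialSegment_of_walk hcard w hstrip (.refl _)).1 hsub
  push Not at hstrip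
  obtain ⟨z, hz, hzout⟩ := hstrip
  have hfar : 1 ≤ 2 ^ (c + 1) * |x.1.2 - z.1.2| := by
    rw [← abs_of_pos (by positivity : (0 : ℝ) < 2 ^ (c + 1)), ← abs_mul, mul_sub, hx, pow_succ,
      le_abs]
    by_cases h : (i : ℝ) < 2 ^ c * z.1.2
    · have := hzout h
      right; linarith
    · left; linarith
  have hlen := two_pow_mul_le_length_of_mem_support w hz
  rw [hy, abs_sub_comm z.1.2] at hlen
  have h2k : (2 : ℝ) ^ k = 2 ^ j * 2 ^ (c + 1) := by rw [hk, pow_add, pow_succ, pow_succ]; ring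
  rw [h2k] at hlen
  have : (2 : ℝ) ^ (j + 1) ≤ w.length := by
    rw [pow_succ]
    nlinarith [pow_pos (two_pos : (0 : ℝ) < 2) j]
  exact_mod_cast this

theorem IsSubDiamond.exists_midpoints (h : IsSubDiamond k (j + 1) u v) :
    ∃ m : ℕ → Vert k, (∀ n, IsSubDiamond k j u (m n) ∧ IsSubDiamond k j (m n) v) ∧
      ∀ n n', n ≠ n' → ∀ w : (Gk k).Walk (m n) (m n'), 2 ^ (j + 1) ≤ w.length := by
  obtain ⟨E, i, hk, hi, hu, hv, huE, hvE, -⟩ := h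
  set c := E.card
  let label : ℕ → ℕ := fun n => E.sup id + 1 + n
  have hlabel : ∀ n, ∀ e ∈ E, e < label n := fun n e he => by
    have : e ≤ E.sup id := Finset.le_sup (f := id) he
    show e < E.sup id + 1 + n
    omega
  have hcard : ∀ n, (insert (label n) E).card = c + 1 := fun n =>
    Finset.card_insert_of_notMem fun h => (hlabel n _ h).false
  have hvert : ∀ n, IsVertex k (insert (label n) E, (2 * i + 1) / 2 ^ (c + 1)) := fun n => by
    refine ⟨by rw [hcard]; omega, ?_⟩
    rw [hcard]
    exact ⟨i + 1, by omega, by omega, by push_cast; ring⟩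
  let m : ℕ → Vert k := fun n => ⟨_, hvert n⟩
  have hm : ∀ n, 2 ^ (c + 1) * (m n).1.2 = 2 * i + 1 := fun n => by
    simp only [m]
    field_simp
  have hmE : ∀ n, (m n).1.1 = insert (label n) E := fun n => rfl
  have hcard_le (w : Vert k) (hw : IsInitialSegment w.1.1 E) : w.1.1.card ≤ c :=
    Finset.card_le_card hw.1
  refine ⟨m, fun n => ⟨?_, ?_⟩, fun n n' hnn' w => ?_⟩
  · refine ⟨insert (label n) E, 2 * i, by rw [hcard]; omega, by rw [hcard, pow_succ]; omega,
      ?_, ?_, huE.trans (.insert_of_forall_lt (hlabel n)), .refl _, Or.inl ?_⟩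
    · rw [hcard, pow_succ]; push_cast; linarith
    · rw [hcard]; push_cast; exact hm n
    · rw [hmE, hcard]; have := hcard_le u huE; omega
  · refine ⟨insert (label n) E, 2 * i + 1, by rw [hcard]; omega, by rw [hcard, pow_succ]; omega,
      ?_, ?_, .refl _, hvE.trans (.insert_of_forall_lt (hlabel n)), Or.inl ?_⟩
    · rw [hcard]; push_cast; exact hm n
    · rw [hcard, pow_succ]; push_cast; linarith
    · rw [hmE, hcard]; have := hcard_le v hvE; omega
  · refine two_pow_le_length_of_not_subset (c := c) (y := m n') (by omega) (hm n) rfl (hcard n)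
      (fun hsub => ?_) w
    rcases Finset.mem_insert.1 (hsub (Finset.mem_insert_self (label n) E)) with h | h
    · exact hnn' (by simpa [label] using h)
    · exact (hlabel n _ h).false

theorem IsSubDiamond.exists_walk (hk : 1 ≤ k) (h : IsSubDiamond k j u v) :
    ∃ w : (Gk k).Walk u v, w.length = 2 ^ j := by
  induction j generalizing u v with
  | zero => exact ⟨(h.adj hk).toWalk, by simp⟩
  | succ j ih =>
    obtain ⟨m, hm, -⟩ := h.exists_midpoints
    obtain ⟨w₁, hw₁⟩ := ih (hm 0).1
    obtain ⟨w₂, hw₂⟩ := ih (hm 0).2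
    exact ⟨w₁.append w₂, by rw [SimpleGraph.Walk.length_append, hw₁, hw₂, pow_succ]; omega⟩

theorem IsSubDiamond.dist_eq (hk : 1 ≤ k) (h : IsSubDiamond k j u v) :
    ((Gk k).dist u v : ℝ) = 2 ^ j := by
  obtain ⟨w, hw⟩ := h.exists_walk hk
  obtain ⟨w', hw'⟩ := w.reachable.exists_walk_length_eq_dist
  obtain ⟨E, i, hE, -, hu, hv, -⟩ := h
  refine le_antisymm (by exact_mod_cast hw ▸ SimpleGraph.dist_le w) ?_
  have h2k : (2 : ℝ) ^ k = 2 ^ j * 2 ^ E.card := by rw [← hE, pow_add, mul_comm]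
  have hlen := two_pow_mul_abs_sub_le_length w'
  rw [hw', h2k, mul_assoc, ← abs_of_pos (by positivity : (0 : ℝ) < 2 ^ E.card), ← abs_mul,
    mul_sub, hu, hv] at hlen
  simpa using hlen

theorem IsSubDiamond.exists_separated_midpoints (hk : 1 ≤ k) (h : IsSubDiamond k (j + 1) u v) :
    ∃ m : ℕ → Vert k, (∀ n, IsSubDiamond k j u (m n) ∧ IsSubDiamond k j (m n) v) ∧
      ∀ n n', n ≠ n' → (2 : ℝ) ^ (j + 1) ≤ (Gk k).dist (m n) (m n') := by
  obtain ⟨m, hm, hsep⟩ := h.exists_midpoints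
  refine ⟨m, hm, fun n n' hnn' => ?_⟩
  obtain ⟨w₁, -⟩ := (hm n).1.exists_walk hk
  obtain ⟨w₂, -⟩ := (hm n').1.exists_walk hk
  obtain ⟨w, hw⟩ := (w₁.reachable.symm.trans w₂.reachable).exists_walk_length_eq_dist
  exact_mod_cast hw ▸ hsep n n' hnn' w

theorem exists_isSubDiamond (hj : j ≤ k) : ∃ u v : Vert k, IsSubDiamond k j u v := by
  induction hj using Nat.decreasingInduction with
  | self =>
    refine ⟨⟨(∅, 0), by simp [IsVertex, Bset]⟩, ⟨(∅, 1), by simp [IsVertex, Bset]⟩,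
      ∅, 0, by simp, by simp, by simp, by simp, .refl _, .refl _, Or.inr rfl⟩
  | of_succ j _ ih =>
    obtain ⟨u, v, h⟩ := ih
    obtain ⟨m, hm, -⟩ := h.exists_midpoints
    exact ⟨u, m 0, (hm 0).1⟩

end SubDiamond

theorem exists_ne_dist_lt_of_isBounded {X : Type*} [PseudoMetricSpace X] [ProperSpace X]
    {x : ℕ → X} (hx : Bornology.IsBounded (Set.range x)) {ε : ℝ} (hε : 0 < ε) :
    ∃ n m, n ≠ m ∧ dist (x n) (x m) < ε := by
  obtain ⟨_, -, φ, hφ, hlim⟩ := tendsto_subseq_of_bounded hx (fun n => Set.mem_range_self n)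
  obtain ⟨M, hM⟩ := Metric.cauchySeq_iff'.1 hlim.cauchySeq ε hε
  exact ⟨φ (M + 1), φ M, (hφ M.lt_succ_self).ne', hM (M + 1) M.le_succ⟩

theorem exists_ne_sub_near_of_finiteDimensional_quotient {Y : Type*} [NormedAddCommGroup Y]
    [NormedSpace ℝ Y] {Z : Submodule ℝ Y} (hZ : IsClosed (Z : Set Y))
    [FiniteDimensional ℝ (Y ⧸ Z)] {y : ℕ → Y} {C : ℝ} (hy : ∀ n, ‖y n‖ ≤ C) {ε : ℝ}
    (hε : 0 < ε) : ∃ n m, n ≠ m ∧ ∃ z ∈ Z, ‖y n - y m - z‖ < ε := by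
  have : IsClosed (Z : Set Y) := hZ
  have : ProperSpace (Y ⧸ Z) := FiniteDimensional.proper ℝ (Y ⧸ Z)
  have hbdd : Bornology.IsBounded (Set.range fun n => Z.mkQ (y n)) :=
    (Metric.isBounded_closedBall (x := 0) (r := C)).subset <| Set.range_subset_iff.2 fun n => by
      simpa using (Submodule.Quotient.norm_mk_le Z (y n)).trans (hy n)
  obtain ⟨n, m, hnm, hdist⟩ := exists_ne_dist_lt_of_isBounded hbdd hε
  rw [dist_eq_norm, ← map_sub, Submodule.mkQ_apply] at hdist
  change ‖((y n - y m : Y) : Y ⧸ Z.toAddSubgroup)‖ < ε at hdist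
  rw [QuotientAddGroup.norm_mk] at hdist
  obtain ⟨z, hz, hdz⟩ := (Metric.infDist_lt_iff ⟨0, Z.zero_mem⟩).1 hdist
  exact ⟨n, m, hnm, z, hz, by rwa [← dist_eq_norm]⟩

structure IsEquivNorm {Y : Type*} [NormedAddCommGroup Y] [NormedSpace ℝ Y] (N : Y → ℝ)
    (a b : ℝ) : Prop where
  pos_left : 0 < a
  pos_right : 0 < b
  le_apply : ∀ y, a * ‖y‖ ≤ N y
  apply_le : ∀ y, N y ≤ b * ‖y‖
  add_le : ∀ x y, N (x + y) ≤ N x + N y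
  smul : ∀ (c : ℝ) (y : Y), N (c • y) = |c| * N y

namespace IsEquivNorm

variable {Y : Type*} [NormedAddCommGroup Y] [NormedSpace ℝ Y] {N : Y → ℝ} {a b : ℝ}

theorem nonneg (hN : IsEquivNorm N a b) (y : Y) : 0 ≤ N y :=
  (mul_nonneg hN.pos_left.le (norm_nonneg y)).trans (hN.le_apply y)

theorem neg (hN : IsEquivNorm N a b) (y : Y) : N (-y) = N y := by
  rw [← neg_one_smul ℝ y, hN.smul, abs_neg, abs_one, one_mul]

theorem sub_le (hN : IsEquivNorm N a b) (x y z : Y) : N (x - z) ≤ N (x - y) + N (y - z) := by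
  simpa using hN.add_le (x - y) (y - z)

theorem apply_smul_inv_self (hN : IsEquivNorm N a b) {x : Y} (hx : 0 < N x) :
    N ((N x)⁻¹ • x) = 1 := by
  rw [hN.smul, abs_inv, abs_of_pos hx, inv_mul_cancel₀ hx.ne']

theorem apply_add_smul_le (hN : IsEquivNorm N a b) {x w : Y} {τ L : ℝ} (hτ₀ : 0 ≤ τ)
    (hτ₁ : τ ≤ 1) (hx : N x ≤ L) (hxw : N (x + w) ≤ L) : N (x + τ • w) ≤ L := by
  have hsplit : x + τ • w = (1 - τ) • x + τ • (x + w) := by module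
  calc N (x + τ • w) ≤ N ((1 - τ) • x) + N (τ • (x + w)) := hsplit ▸ hN.add_le _ _
    _ = (1 - τ) * N x + τ * N (x + w) := by
        rw [hN.smul, hN.smul, abs_of_nonneg (sub_nonneg.2 hτ₁), abs_of_nonneg hτ₀]
    _ ≤ (1 - τ) * L + τ * L := by gcongr
    _ = L := by ring

/-- The two points lie on the segments from `x / N x` to `(x ± z) / N x`. -/
theorem max_apply_le_of_apply_add_le (hN : IsEquivNorm N a b) {x z : Y} {t S : ℝ} (ht : 0 < t)
    (hx : 0 < N x) (hz : t * N x ≤ N z) (hS : N x ≤ S) (hplus : N (x + z) ≤ S)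
    (hminus : N (x - z) ≤ S) :
    max (N ((N x)⁻¹ • x + t • (N z)⁻¹ • z)) (N ((N x)⁻¹ • x - t • (N z)⁻¹ • z)) ≤ S / N x := by
  have hzpos : 0 < N z := (mul_pos ht hx).trans_le hz
  set τ := t * N x / N z
  have hτ : τ ≤ 1 := (div_le_one hzpos).2 hz
  have hsegment (w : Y) (hw : N (x + w) ≤ S) :
      N ((N x)⁻¹ • x + τ • (N x)⁻¹ • w) ≤ S / N x := by
    refine hN.apply_add_smul_le (by positivity) hτ ?_ ?_
    · rw [hN.apply_smul_inv_self hx, le_div_iff₀ hx, one_mul]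
      exact hS
    · rw [← smul_add, hN.smul, abs_inv, abs_of_pos hx, inv_mul_eq_div]
      exact div_le_div_of_nonneg_right hw hx.le
  have hscale : τ • (N x)⁻¹ • z = t • (N z)⁻¹ • z := by
    simp only [τ, smul_smul]
    congr 1
    field_simp
  refine max_le ?_ ?_
  · simpa [hscale] using hsegment z hplus
  · simpa [hscale, ← sub_eq_add_neg] using hsegment (-z) (by rwa [← sub_eq_add_neg])

theorem amucWith_le (hN : IsEquivNorm N a b) {t L : ℝ} (hL : 0 ≤ L) {y : Y} (hy : N y = 1)
    (h : ∀ Z : Submodule ℝ Y, IsClosed (Z : Set Y) → FiniteDimensional ℝ (Y ⧸ Z) → ∀ η > 0,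
      ∃ z ∈ Z, N z = 1 ∧ max (N (y + t • z)) (N (y - t • z)) ≤ L + η) :
    amucWith Y N t ≤ L - 1 := by
  have hmax_nonneg (y z : Y) : 0 ≤ max (N (y + t • z)) (N (y - t • z)) :=
    le_max_of_le_left (hN.nonneg _)
  refine sub_le_sub_right ((ciInf_le ⟨0, ?_⟩ ⟨y, hy⟩).trans (Real.iSup_le ?_ hL)) 1
  · rintro _ ⟨y, rfl⟩
    exact Real.iSup_nonneg fun Z => Real.iInf_nonneg fun z => hmax_nonneg _ _
  · rintro ⟨Z, hZ, hZfin⟩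
    refine le_of_forall_pos_le_add fun η hη => ?_
    obtain ⟨z, hzZ, hz, hmax⟩ := h Z hZ hZfin η hη
    refine (ciInf_le ⟨0, ?_⟩ ⟨z, hzZ, hz⟩).trans hmax
    rintro _ ⟨z, rfl⟩
    exact hmax_nonneg _ _

variable {t r R : ℝ} {U W : Y} {y : ℕ → Y}

/-- The compactness step: two of the approximate midpoints `y n`, `y m` differ, up to an
arbitrarily small error, by a vector `z` of the finite-codimensional subspace `Z`. -/
theorem exists_mem_max_apply_le (hN : IsEquivNorm N a b) (ht : 0 < t)
    (hU : ∀ n, N (U - y n) ≤ R) (hW : ∀ n, N (y n - W) ≤ R)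
    (hsep : ∀ n m, n ≠ m → r ≤ N (y n - y m)) (htr : t * N (U - W) < r)
    (hUW : 0 < N (U - W)) (hR : N (U - W) ≤ 2 * R) {Z : Submodule ℝ Y}
    (hZ : IsClosed (Z : Set Y)) [FiniteDimensional ℝ (Y ⧸ Z)] {η : ℝ} (hη : 0 < η) :
    ∃ z ∈ Z, N z = 1 ∧
      max (N ((N (U - W))⁻¹ • (U - W) + t • z)) (N ((N (U - W))⁻¹ • (U - W) - t • z)) ≤
        2 * R / N (U - W) + η := by
  set d := N (U - W)
  set δ := min (r - t * d) (η * d)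
  have hδpos : 0 < δ := lt_min (by linarith) (by positivity)
  have hy_bdd (n : ℕ) : ‖y n‖ ≤ ‖U‖ + R / a := by
    have := (hN.le_apply (U - y n)).trans (hU n)
    calc ‖y n‖ ≤ ‖U‖ + ‖U - y n‖ := by rw [norm_sub_rev]; exact norm_le_insert' _ _
      _ ≤ ‖U‖ + R / a := by gcongr; rw [le_div_iff₀' hN.pos_left]; exact this
  obtain ⟨n, m, hnm, z₀, hz₀Z, hv⟩ :=
    exists_ne_sub_near_of_finiteDimensional_quotient hZ hy_bdd (div_pos hδpos hN.pos_right)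
  set v := y n - y m - z₀
  have hNv : N v ≤ δ :=
    (hN.apply_le v).trans (by rw [← le_div_iff₀' hN.pos_right]; exact hv.le)
  have hNz₀ : t * d ≤ N z₀ := by
    have := hN.add_le z₀ v
    rw [add_sub_cancel] at this
    linarith [hsep n m hnm, min_le_left (r - t * d) (η * d)]
  have hplus : N (U - W + z₀) ≤ 2 * R + N v := by
    have h := hN.add_le (U - y m + (y n - W)) (-v)
    rw [hN.neg, show U - y m + (y n - W) + -v = U - W + z₀ by simp only [v]; abel] at h
    linarith [hU m, hW n, hN.add_le (U - y m) (y n - W)]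
  have hminus : N (U - W - z₀) ≤ 2 * R + N v := by
    have h := hN.add_le (U - y n + (y m - W)) v
    rw [show U - y n + (y m - W) + v = U - W - z₀ by simp only [v]; abel] at h
    linarith [hU n, hW m, hN.add_le (U - y n) (y m - W)]
  have hz₀pos : 0 < N z₀ := (mul_pos ht hUW).trans_le hNz₀
  refine ⟨(N z₀)⁻¹ • z₀, Z.smul_mem _ hz₀Z, hN.apply_smul_inv_self hz₀pos, ?_⟩
  refine (hN.max_apply_le_of_apply_add_le ht hUW hNz₀ (by linarith [hN.nonneg v]) hplus
    hminus).trans ?_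
  rw [add_div, add_le_add_iff_left, div_le_iff₀ hUW]
  exact hNv.trans (min_le_right _ _)

theorem one_add_amucWith_mul_le (hN : IsEquivNorm N a b) (ht : 0 < t)
    (hU : ∀ n, N (U - y n) ≤ R) (hW : ∀ n, N (y n - W) ≤ R)
    (hsep : ∀ n m, n ≠ m → r ≤ N (y n - y m)) (htr : t * N (U - W) < r) :
    (1 + amucWith Y N t) * N (U - W) ≤ 2 * R := by
  have hR : N (U - W) ≤ 2 * R := (hN.sub_le U (y 0) W).trans (by linarith [hU 0, hW 0])
  rcases (hN.nonneg (U - W)).eq_or_lt with hUW | hUW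
  · rw [← hUW, mul_zero]
    linarith
  have hL : 1 ≤ 2 * R / N (U - W) := (one_le_div hUW).2 hR
  have hamuc : amucWith Y N t ≤ 2 * R / N (U - W) - 1 :=
    hN.amucWith_le (by linarith) (hN.apply_smul_inv_self hUW) fun Z hZ _ η hη =>
      hN.exists_mem_max_apply_le ht hU hW hsep htr hUW hR hZ hη
  calc (1 + amucWith Y N t) * N (U - W) ≤ 2 * R / N (U - W) * N (U - W) := by gcongr; linarith
    _ = 2 * R := div_mul_cancel₀ _ hUW.ne'

end IsEquivNorm

def IsNormalizedEmbedding {Y : Type*} [NormedAddCommGroup Y] (k : ℕ) (D : ℝ)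
    (g : Vert k → Y) : Prop :=
  ∀ x y, ((Gk k).dist x y : ℝ) ≤ ‖g x - g y‖ ∧ ‖g x - g y‖ ≤ D * (Gk k).dist x y

theorem EmbedsWith.exists_isNormalizedEmbedding {Y : Type*} [NormedAddCommGroup Y]
    [NormedSpace ℝ Y] {k : ℕ} {D : ℝ} (h : EmbedsWith k Y D) :
    ∃ g : Vert k → Y, IsNormalizedEmbedding k D g := by
  obtain ⟨s, f, hs, hf⟩ := h
  refine ⟨fun x => s⁻¹ • f x, fun x y => ?_⟩
  rw [← smul_sub, norm_smul, Real.norm_eq_abs, abs_inv, abs_of_pos hs, le_inv_mul_iff₀ hs,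
    inv_mul_le_iff₀ hs, ← mul_assoc, mul_comm s D]
  exact hf x y

noncomputable def levelSup {Y : Type*} [NormedAddCommGroup Y] {k : ℕ} (N : Y → ℝ) (g : Vert k → Y)
    (j : ℕ) : ℝ :=
  sSup {x | ∃ u v, IsSubDiamond k j u v ∧ x = N (g u - g v) / 2 ^ j}

theorem pow_mul_le_of_forall_mul_le_succ {σ : ℕ → ℝ} {c : ℝ} {k : ℕ} (hc : 0 ≤ c)
    (h : ∀ j < k, c * σ (j + 1) ≤ σ j) : c ^ k * σ k ≤ σ 0 := by
  induction k with
  | zero => simp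
  | succ k ih =>
    calc c ^ (k + 1) * σ (k + 1) = c ^ k * (c * σ (k + 1)) := by ring
      _ ≤ c ^ k * σ k := by gcongr; exact h k k.lt_succ_self
      _ ≤ σ 0 := ih fun j hj => h j (hj.trans k.lt_succ_self)

theorem add_nat_mul_le_of_forall_add_le_succ {σ : ℕ → ℝ} {K : ℝ} {k : ℕ}
    (h : ∀ j < k, σ (j + 1) + K ≤ σ j) : σ k + k * K ≤ σ 0 := by
  induction k with
  | zero => simp
  | succ k ih =>
    have h₁ := h k k.lt_succ_self
    have h₂ := ih fun j hj => h j (hj.trans k.lt_succ_self)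
    push_cast
    linarith

theorem rpow_mul_div_le_rpow_mul_div {p T t c : ℝ} (hp : 1 ≤ p) (hT : 0 < T) (hTt : T ≤ t)
    (hc : 0 ≤ c) : T ^ p * (c / T) ≤ t ^ p * (c / t) := by
  have ht : 0 < t := hT.trans_le hTt
  rw [mul_div_left_comm, mul_div_left_comm _ c, ← Real.rpow_sub_one hT.ne',
    ← Real.rpow_sub_one ht.ne']
  exact mul_le_mul_of_nonneg_left (Real.rpow_le_rpow hT.le hTt (by linarith)) hc

theorem rpow_one_div_mul_le_one {x T p : ℝ} (hp : 0 < p) (hx : 0 ≤ x) (hT : 0 ≤ T)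
    (h : x * T ^ p ≤ 1) : x ^ (1 / p) * T ≤ 1 := by
  have := Real.rpow_le_one (mul_nonneg hx (Real.rpow_nonneg hT p)) h (one_div_nonneg.2 hp.le)
  rwa [Real.mul_rpow hx (Real.rpow_nonneg hT p), ← Real.rpow_mul hT, mul_one_div_cancel hp.ne',
    Real.rpow_one] at this

namespace IsEquivNorm

variable {Y : Type*} [NormedAddCommGroup Y] [NormedSpace ℝ Y] {N : Y → ℝ} {a b : ℝ}
  {k j : ℕ} {D : ℝ} {g : Vert k → Y}

theorem apply_sub_div_mem_Icc (hN : IsEquivNorm N a b) (hk : 1 ≤ k)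
    (hg : IsNormalizedEmbedding k D g) {u v : Vert k} (h : IsSubDiamond k j u v) :
    N (g u - g v) / 2 ^ j ∈ Set.Icc a (b * D) := by
  have hdist := h.dist_eq hk
  rw [Set.mem_Icc, le_div_iff₀ (by positivity), div_le_iff₀ (by positivity), ← hdist]
  constructor
  · exact (mul_le_mul_of_nonneg_left (hg u v).1 hN.pos_left.le).trans (hN.le_apply _)
  · rw [mul_assoc]
    exact (hN.apply_le _).trans (mul_le_mul_of_nonneg_left (hg u v).2 hN.pos_right.le)

theorem bddAbove_levelSet (hN : IsEquivNorm N a b) (hk : 1 ≤ k)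
    (hg : IsNormalizedEmbedding k D g) :
    BddAbove {x | ∃ u v, IsSubDiamond k j u v ∧ x = N (g u - g v) / 2 ^ j} :=
  ⟨b * D, by rintro _ ⟨u, v, h, rfl⟩; exact (hN.apply_sub_div_mem_Icc hk hg h).2⟩

theorem apply_sub_div_le_levelSup (hN : IsEquivNorm N a b) (hk : 1 ≤ k)
    (hg : IsNormalizedEmbedding k D g) {u v : Vert k} (h : IsSubDiamond k j u v) :
    N (g u - g v) / 2 ^ j ≤ levelSup N g j :=
  le_csSup (hN.bddAbove_levelSet hk hg) ⟨u, v, h, rfl⟩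

theorem levelSup_mem_Icc (hN : IsEquivNorm N a b) (hk : 1 ≤ k)
    (hg : IsNormalizedEmbedding k D g) (hj : j ≤ k) : levelSup N g j ∈ Set.Icc a (b * D) := by
  obtain ⟨u, v, h⟩ := exists_isSubDiamond hj
  refine ⟨(hN.apply_sub_div_mem_Icc hk hg h).1.trans (hN.apply_sub_div_le_levelSup hk hg h),
    csSup_le ⟨_, u, v, h, rfl⟩ ?_⟩
  rintro _ ⟨u, v, h, rfl⟩
  exact (hN.apply_sub_div_mem_Icc hk hg h).2

/-- The midpoints of a sub-diamond of height `2 ^ (j + 1)` are `2 ^ (j + 1)`-separated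
approximate midpoints of its bottom and top, so `one_add_amucWith_mul_le` applies. -/
theorem one_add_amucWith_mul_levelSup_le (hN : IsEquivNorm N a b) (hk : 1 ≤ k)
    (hg : IsNormalizedEmbedding k D g) (hj : j < k) {t : ℝ} (ht : 0 < t)
    (hΔ : 0 ≤ amucWith Y N t) (htσ : t * levelSup N g (j + 1) < a) :
    (1 + amucWith Y N t) * levelSup N g (j + 1) ≤ levelSup N g j := by
  have hΔ' : 0 < 1 + amucWith Y N t := by linarith
  obtain ⟨u₀, v₀, h₀⟩ := exists_isSubDiamond (j := j + 1) hj
  rw [← le_div_iff₀' hΔ']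
  refine csSup_le ⟨_, u₀, v₀, h₀, rfl⟩ ?_
  rintro _ ⟨u, v, h, rfl⟩
  rw [le_div_iff₀' hΔ', mul_div_assoc', div_le_iff₀ (by positivity), pow_succ, ← mul_assoc,
    mul_comm _ 2]
  obtain ⟨m, hm, hsep⟩ := h.exists_separated_midpoints hk
  have hR (x y : Vert k) (hxy : IsSubDiamond k j x y) :
      N (g x - g y) ≤ levelSup N g j * 2 ^ j :=
    (div_le_iff₀ (by positivity)).1 (hN.apply_sub_div_le_levelSup hk hg hxy)
  refine hN.one_add_amucWith_mul_le (y := g ∘ m) (r := a * 2 ^ (j + 1)) ht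
    (fun n => hR _ _ (hm n).1) (fun n => hR _ _ (hm n).2) (fun n n' hnn' => ?_) ?_
  · exact (mul_le_mul_of_nonneg_left ((hsep n n' hnn').trans (hg _ _).1) hN.pos_left.le).trans
      (hN.le_apply _)
  · have := hN.apply_sub_div_le_levelSup hk hg h
    rw [div_le_iff₀ (by positivity)] at this
    calc t * N (g u - g v) ≤ t * (levelSup N g (j + 1) * 2 ^ (j + 1)) := by gcongr
      _ < a * 2 ^ (j + 1) := by rw [← mul_assoc]; gcongr

theorem le_mul_of_embedsWith (hN : IsEquivNorm N a b) (hk : 1 ≤ k) (hE : EmbedsWith k Y D) :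
    a ≤ b * D := by
  obtain ⟨g, hg⟩ := hE.exists_isNormalizedEmbedding
  obtain ⟨hlo, hhi⟩ := hN.levelSup_mem_Icc hk hg (Nat.zero_le k)
  exact hlo.trans hhi

theorem one_add_amucWith_pow_mul_le (hN : IsEquivNorm N a b) (hk : 1 ≤ k)
    (hE : EmbedsWith k Y D) {t : ℝ} (ht : 0 < t) (hΔ : 0 ≤ amucWith Y N t)
    (htD : t * (b * D) < a) : (1 + amucWith Y N t) ^ k * a ≤ b * D := by
  obtain ⟨g, hg⟩ := hE.exists_isNormalizedEmbedding
  have hσ (j : ℕ) (hj : j ≤ k) := hN.levelSup_mem_Icc hk hg hj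
  have hstep (j : ℕ) (hj : j < k) :
      (1 + amucWith Y N t) * levelSup N g (j + 1) ≤ levelSup N g j :=
    hN.one_add_amucWith_mul_levelSup_le hk hg hj ht hΔ
      ((mul_le_mul_of_nonneg_left (hσ (j + 1) hj).2 ht.le).trans_lt htD)
  calc (1 + amucWith Y N t) ^ k * a ≤ (1 + amucWith Y N t) ^ k * levelSup N g k := by
        gcongr
        exact (hσ k le_rfl).1
    _ ≤ levelSup N g 0 := pow_mul_le_of_forall_mul_le_succ (by linarith) hstep
    _ ≤ b * D := (hσ 0 (Nat.zero_le k)).2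

theorem exists_not_embedsWith (hN : IsEquivNorm N a b)
    (hamuc : ∀ t ∈ Set.Ioo (0 : ℝ) 1, 0 < amucWith Y N t) (hD : 0 < D) :
    ∃ k, ¬ EmbedsWith k Y D := by
  have hbD : 0 < b * D := mul_pos hN.pos_right hD
  set t := min (a / (2 * (b * D))) (1 / 2)
  have ht : t ∈ Set.Ioo (0 : ℝ) 1 :=
    ⟨lt_min (div_pos hN.pos_left (by positivity)) (by norm_num),
      (min_le_right _ _).trans_lt (by norm_num)⟩
  have htD : t * (b * D) < a := by
    calc t * (b * D) ≤ a / (2 * (b * D)) * (b * D) := by gcongr; exact min_le_left _ _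
      _ < a := by rw [div_mul_eq_mul_div, div_lt_iff₀ (by positivity)]; nlinarith [hN.pos_left]
  have hΔ := hamuc t ht
  obtain ⟨k, hk⟩ := pow_unbounded_of_one_lt (b * D / a) (lt_add_of_pos_right 1 hΔ)
  refine ⟨k + 1, fun hE => ?_⟩
  have hpow := hN.one_add_amucWith_pow_mul_le k.succ_pos hE ht.1 hΔ.le htD
  rw [← le_div_iff₀ hN.pos_left] at hpow
  exact (hk.trans (pow_lt_pow_right₀ (lt_add_of_pos_right 1 hΔ) k.lt_succ_self)).not_ge hpow

/-- At level `j + 1` one applies the power-type bound with the largest admissible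
`t = a / (2 σ_{j+1})`; each level then gains at least `γ T ^ p b D`, where `T = a / (2 b D)`. -/
theorem nat_mul_mul_rpow_le_one (hN : IsEquivNorm N a b) (hk : 1 ≤ k) (hE : EmbedsWith k Y D)
    {p γ : ℝ} (hp : 1 ≤ p) (hγ : 0 ≤ γ)
    (hpt : ∀ t ∈ Set.Ioo (0 : ℝ) 1, γ * t ^ p ≤ amucWith Y N t) :
    k * γ * (a / (2 * (b * D))) ^ p ≤ 1 := by
  have ha := hN.pos_left
  have hbD : 0 < b * D := ha.trans_le (hN.le_mul_of_embedsWith hk hE)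
  obtain ⟨g, hg⟩ := hE.exists_isNormalizedEmbedding
  set T := a / (2 * (b * D))
  have hstep (j : ℕ) (hj : j < k) :
      levelSup N g (j + 1) + γ * T ^ p * (b * D) ≤ levelSup N g j := by
    obtain ⟨hlo, hhi⟩ := hN.levelSup_mem_Icc hk hg hj
    set σ := levelSup N g (j + 1)
    have hσ : 0 < σ := ha.trans_le hlo
    set t := a / (2 * σ)
    have ht : t ∈ Set.Ioo (0 : ℝ) 1 := ⟨by positivity, by rw [div_lt_one (by positivity)]; linarith⟩
    have htσ : t * σ < a := by rw [div_mul_eq_mul_div, div_lt_iff₀ (by positivity)]; nlinarith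
    have hΔ := hpt t ht
    have hmid := hN.one_add_amucWith_mul_levelSup_le hk hg hj ht.1
      ((by positivity : 0 ≤ γ * t ^ p).trans hΔ) htσ
    have hgain : T ^ p * (b * D) ≤ t ^ p * σ := by
      have hTt : T ≤ t := div_le_div_of_nonneg_left ha.le (by positivity) (by linarith)
      have hT : T ^ p * (a / 2 / T) ≤ t ^ p * (a / 2 / t) :=
        rpow_mul_div_le_rpow_mul_div hp (by positivity) hTt (by positivity)
      have hT' : a / 2 / T = b * D := by simp only [T]; field_simp
      have ht' : a / 2 / t = σ := by simp only [t]; field_simp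
      rwa [hT', ht'] at hT
    calc σ + γ * T ^ p * (b * D) ≤ σ + γ * t ^ p * σ := by
          rw [mul_assoc, mul_assoc]; gcongr
      _ ≤ σ + amucWith Y N t * σ := by gcongr
      _ = (1 + amucWith Y N t) * σ := by ring
      _ ≤ levelSup N g j := hmid
  have hsum := add_nat_mul_le_of_forall_add_le_succ hstep
  have hk' := (hN.levelSup_mem_Icc hk hg le_rfl).1
  have h0 := (hN.levelSup_mem_Icc hk hg (Nat.zero_le k)).2
  refine le_of_mul_le_mul_right ?_ hbD
  linarith

theorem mul_rpow_one_div_le_of_embedsWith (hN : IsEquivNorm N a b) (hk : 1 ≤ k)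
    (hE : EmbedsWith k Y D) {p γ : ℝ} (hp : 1 ≤ p) (hγ : 0 ≤ γ)
    (hpt : ∀ t ∈ Set.Ioo (0 : ℝ) 1, γ * t ^ p ≤ amucWith Y N t) :
    a / (2 * b) * γ ^ (1 / p) * (k : ℝ) ^ (1 / p) ≤ D := by
  have hbD : 0 < b * D := hN.pos_left.trans_le (hN.le_mul_of_embedsWith hk hE)
  have hD : 0 < D := pos_of_mul_pos_right hbD hN.pos_right.le
  have h := rpow_one_div_mul_le_one (by linarith) (by positivity)
    (div_pos hN.pos_left (by positivity)).le (hN.nat_mul_mul_rpow_le_one hk hE hp hγ hpt)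
  rw [Real.mul_rpow (Nat.cast_nonneg k) hγ] at h
  calc a / (2 * b) * γ ^ (1 / p) * (k : ℝ) ^ (1 / p)
        = (k : ℝ) ^ (1 / p) * γ ^ (1 / p) * (a / (2 * (b * D))) * D := by
          field_simp
    _ ≤ 1 * D := by gcongr
    _ = D := one_mul D

end IsEquivNorm

/-- If `Y` admits an equivalent asymptotically midpoint
uniformly convex norm `N`, then `sup_k c_Y(G_k) = ∞`; if moreover the modulus of
`N` has power type `p ∈ (1,∞)`, then `c_Y(G_k) ≳ k^{1/p}`. -/
theorem no_equi_embedding (Y : Type) [NormedAddCommGroup Y] [NormedSpace ℝ Y]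
    (N : Y → ℝ) (a b : ℝ) (ha : 0 < a) (hb : 0 < b)
    (hN : ∀ y : Y, a * ‖y‖ ≤ N y ∧ N y ≤ b * ‖y‖)
    (hadd : ∀ x y : Y, N (x + y) ≤ N x + N y)
    (hsmul : ∀ (c : ℝ) (y : Y), N (c • y) = |c| * N y)
    (hamuc : ∀ t ∈ Set.Ioo (0 : ℝ) 1, 0 < amucWith Y N t) :
    (∀ D : ℝ, 1 ≤ D → ∃ k : ℕ, ¬ EmbedsWith k Y D) ∧
    (∀ p : ℝ, 1 < p → ∀ γ : ℝ, 0 < γ →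
      (∀ t ∈ Set.Ioo (0 : ℝ) 1, γ * t ^ p ≤ amucWith Y N t) →
      ∃ c : ℝ, 0 < c ∧ ∀ k : ℕ, 1 ≤ k → ∀ D : ℝ,
        EmbedsWith k Y D → c * (k : ℝ) ^ (1 / p) ≤ D) := by
  have hnorm : IsEquivNorm N a b := ⟨ha, hb, fun y => (hN y).1, fun y => (hN y).2, hadd, hsmul⟩
  refine ⟨fun D hD => hnorm.exists_not_embedsWith hamuc (by linarith), fun p hp γ hγ hpt => ?_⟩
  exact ⟨a / (2 * b) * γ ^ (1 / p), by positivity, fun k hk D hE =>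
    hnorm.mul_rpow_one_div_le_of_embedsWith hk hE hp.le hγ.le hpt⟩

end DiamondPaper
end
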